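/- arXiv:2502.09028 — 10 statements merged into one kernel-verified Lean document; each statement's English description precedes it below -/
import Mathlib

section
/- Let Ω ⊆ ℝ be a nonempty open set, k a nonnegative integer, and D, A : C^k(Ω) → C(Ω) operators satisfying the second-order Leibniz rule D(f·g) = D(f)·g + f·D(g) + 2·A(f)·A(g) for all f, g ∈ C^k(Ω). Then for all f, g, h ∈ C^k(Ω): D(f·g·h) − f·D(g·h) − g·D(f·h) − h·D(f·g) + f·g·D(h) + f·h·D(g) + g·h·D(f) = 2·A(h)·(A(f·g) − f·A(g) − g·A(f)). -/
/-- If the pair `(D, A)` of operators from `C^k(Ω)` to `C(Ω)` satisfies the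
second-order Leibniz rule `D(fg) = D(f)·g + f·D(g) + 2·A(f)·A(g)`, then
`D(fgh) − f·D(gh) − g·D(fh) − h·D(fg) + fg·D(h) + fh·D(g) + gh·D(f)
  = 2·A(h)·(A(fg) − f·A(g) − g·A(f))`. -/
theorem statement2 (Ω : Set ℝ) (hΩ : IsOpen Ω) (hΩne : Ω.Nonempty) (k : ℕ)
    (D A : (ℝ → ℝ) → (ℝ → ℝ))
    (hDmap : ∀ f : ℝ → ℝ, ContDiffOn ℝ k f Ω → ContinuousOn (D f) Ω)
    (hAmap : ∀ f : ℝ → ℝ, ContDiffOn ℝ k f Ω → ContinuousOn (A f) Ω)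
    (hLeibniz2 : ∀ f g : ℝ → ℝ, ContDiffOn ℝ k f Ω → ContDiffOn ℝ k g Ω →
      ∀ x ∈ Ω, D (fun y => f y * g y) x = D f x * g x + f x * D g x + 2 * A f x * A g x) :
    ∀ f g h : ℝ → ℝ, ContDiffOn ℝ k f Ω → ContDiffOn ℝ k g Ω → ContDiffOn ℝ k h Ω →
      ∀ x ∈ Ω,
        D (fun y => f y * g y * h y) x
          - f x * D (fun y => g y * h y) x
          - g x * D (fun y => f y * h y) x
          - h x * D (fun y => f y * g y) x
          + f x * g x * D h x
          + f x * h x * D g x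
          + g x * h x * D f x
        = 2 * A h x * (A (fun y => f y * g y) x - f x * A g x - g x * A f x) := by
  intro f g h hf hg hh x hx
  have h1 := hLeibniz2 (fun y => f y * g y) h (hf.mul hg) hh x hx
  have h2 := hLeibniz2 g h hg hh x hx
  have h3 := hLeibniz2 f h hf hh x hx
  have h4 := hLeibniz2 f g hf hg x hx
  rw [h1, h2, h3, h4]
  ring
end

section
/- Let Ω ⊆ ℝ be a nonempty open set, k a nonnegative integer, and D, A : C^k(Ω) → C(Ω) operators such that D(f·g) = D(f)·g + f·D(g) + 2·A(f)·A(g) for all f, g ∈ C^k(Ω), and such that A satisfies the Leibniz rule A(f·g) = A(f)·g + f·A(g) for all f, g ∈ C^k(Ω). Then D satisfies the identity D(f·g·h) − f·D(g·h) − g·D(f·h) − h·D(f·g) + f·g·D(h) + f·h·D(g) + g·h·D(f) = 0 for all f, g, h ∈ C^k(Ω). -/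
/-- If the pair `(D, A)` satisfies the second-order Leibniz rule and `A`
satisfies the (first-order) Leibniz rule, then `D` satisfies the identity (★). -/
theorem statement3 (Ω : Set ℝ) (hΩ : IsOpen Ω) (hΩne : Ω.Nonempty) (k : ℕ)
    (D A : (ℝ → ℝ) → (ℝ → ℝ))
    (hDmap : ∀ f : ℝ → ℝ, ContDiffOn ℝ k f Ω → ContinuousOn (D f) Ω)
    (hAmap : ∀ f : ℝ → ℝ, ContDiffOn ℝ k f Ω → ContinuousOn (A f) Ω)
    (hLeibniz2 : ∀ f g : ℝ → ℝ, ContDiffOn ℝ k f Ω → ContDiffOn ℝ k g Ω →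
      ∀ x ∈ Ω, D (fun y => f y * g y) x = D f x * g x + f x * D g x + 2 * A f x * A g x)
    (hALeibniz : ∀ f g : ℝ → ℝ, ContDiffOn ℝ k f Ω → ContDiffOn ℝ k g Ω →
      ∀ x ∈ Ω, A (fun y => f y * g y) x = A f x * g x + f x * A g x) :
    ∀ f g h : ℝ → ℝ, ContDiffOn ℝ k f Ω → ContDiffOn ℝ k g Ω → ContDiffOn ℝ k h Ω →
      ∀ x ∈ Ω,
        D (fun y => f y * g y * h y) x
          - f x * D (fun y => g y * h y) x
          - g x * D (fun y => f y * h y) x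
          - h x * D (fun y => f y * g y) x
          + f x * g x * D h x
          + f x * h x * D g x
          + g x * h x * D f x = 0 := by
  intro f g h hf hg hh x hx
  have hfg : ContDiffOn ℝ k (fun y => f y * g y) Ω := hf.mul hg
  have h1 := hLeibniz2 (fun y => f y * g y) h hfg hh x hx
  have h2 := hLeibniz2 g h hg hh x hx
  have h3 := hLeibniz2 f h hf hh x hx
  have h4 := hLeibniz2 f g hf hg x hx
  have h5 := hALeibniz f g hf hg x hx
  simp only [h1, h2, h3, h4, h5]
  ring
end

section
/- Let Ω ⊆ ℝ be a nonempty open set, k a nonnegative integer, and D, A : C^k(Ω) → C(Ω) operators satisfying D(f·g) = D(f)·g + f·D(g) + 2·A(f)·A(g) for all f, g ∈ C^k(Ω). Then for all f, g, h ∈ C^k(Ω): D(f·g·h) − f·D(g·h) − g·D(f·h) − h·D(f·g) + f·g·D(h) + f·h·D(g) + g·h·D(f) = (2/3)·A(h)·(A(f·g) − f·A(g) − g·A(f)) + (2/3)·A(g)·(A(f·h) − f·A(h) − h·A(f)) + (2/3)·A(f)·(A(g·h) − g·A(h) − h·A(g)). -/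
/-- If the pair `(D, A)` satisfies the second-order Leibniz rule, then the
left-hand side of (★) equals the symmetrized expression
`(2/3)·A(h)·(A(fg) − f·A(g) − g·A(f)) + (2/3)·A(g)·(A(fh) − f·A(h) − h·A(f))
  + (2/3)·A(f)·(A(gh) − g·A(h) − h·A(g))`. -/
theorem statement4 (Ω : Set ℝ) (hΩ : IsOpen Ω) (hΩne : Ω.Nonempty) (k : ℕ)
    (D A : (ℝ → ℝ) → (ℝ → ℝ))
    (hDmap : ∀ f : ℝ → ℝ, ContDiffOn ℝ k f Ω → ContinuousOn (D f) Ω)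
    (hAmap : ∀ f : ℝ → ℝ, ContDiffOn ℝ k f Ω → ContinuousOn (A f) Ω)
    (hLeibniz2 : ∀ f g : ℝ → ℝ, ContDiffOn ℝ k f Ω → ContDiffOn ℝ k g Ω →
      ∀ x ∈ Ω, D (fun y => f y * g y) x = D f x * g x + f x * D g x + 2 * A f x * A g x) :
    ∀ f g h : ℝ → ℝ, ContDiffOn ℝ k f Ω → ContDiffOn ℝ k g Ω → ContDiffOn ℝ k h Ω →
      ∀ x ∈ Ω,
        D (fun y => f y * g y * h y) x
          - f x * D (fun y => g y * h y) x
          - g x * D (fun y => f y * h y) x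
          - h x * D (fun y => f y * g y) x
          + f x * g x * D h x
          + f x * h x * D g x
          + g x * h x * D f x
        = (2 / 3 : ℝ) * A h x * (A (fun y => f y * g y) x - f x * A g x - g x * A f x)
          + (2 / 3 : ℝ) * A g x * (A (fun y => f y * h y) x - f x * A h x - h x * A f x)
          + (2 / 3 : ℝ) * A f x * (A (fun y => g y * h y) x - g x * A h x - h x * A g x) := by
  intro f g h hf hg hh x hx
  have dfg := hLeibniz2 f g hf hg x hx
  have dfh := hLeibniz2 f h hf hh x hx
  have dgh := hLeibniz2 g h hg hh x hx
  have e1 : D (fun y => f y * g y * h y) x =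
      D (fun y => f y * g y) x * h x + (f x * g x) * D h x
        + 2 * A (fun y => f y * g y) x * A h x :=
    hLeibniz2 (fun y => f y * g y) h (hf.mul hg) hh x hx
  have key2 : (fun y => f y * g y * h y) = (fun y => g y * (f y * h y)) := by
    funext y; ring
  have e2 : D (fun y => f y * g y * h y) x =
      D g x * (f x * h x) + g x * D (fun y => f y * h y) x
        + 2 * A g x * A (fun y => f y * h y) x := by
    rw [key2]; exact hLeibniz2 g (fun y => f y * h y) hg (hf.mul hh) x hx
  have key3 : (fun y => f y * g y * h y) = (fun y => f y * (g y * h y)) := by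
    funext y; ring
  have e3 : D (fun y => f y * g y * h y) x =
      D f x * (g x * h x) + f x * D (fun y => g y * h y) x
        + 2 * A f x * A (fun y => g y * h y) x := by
    rw [key3]; exact hLeibniz2 f (fun y => g y * h y) hf (hg.mul hh) x hx
  have h1 : D (fun y => f y * g y * h y) x
      - f x * D (fun y => g y * h y) x
      - g x * D (fun y => f y * h y) x
      - h x * D (fun y => f y * g y) x
      + f x * g x * D h x + f x * h x * D g x + g x * h x * D f x
      = 2 * A h x * (A (fun y => f y * g y) x - f x * A g x - g x * A f x) := by
    linear_combination e1 - f x * dgh - g x * dfh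
  have h2 : D (fun y => f y * g y * h y) x
      - f x * D (fun y => g y * h y) x
      - g x * D (fun y => f y * h y) x
      - h x * D (fun y => f y * g y) x
      + f x * g x * D h x + f x * h x * D g x + g x * h x * D f x
      = 2 * A g x * (A (fun y => f y * h y) x - f x * A h x - h x * A f x) := by
    linear_combination e2 - f x * dgh - h x * dfg
  have h3 : D (fun y => f y * g y * h y) x
      - f x * D (fun y => g y * h y) x
      - g x * D (fun y => f y * h y) x
      - h x * D (fun y => f y * g y) x
      + f x * g x * D h x + f x * h x * D g x + g x * h x * D f x
      = 2 * A f x * (A (fun y => g y * h y) x - g x * A h x - h x * A g x) := by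
    linear_combination e3 - g x * dfh - h x * dfg
  linear_combination (1/3 : ℝ) * h1 + (1/3 : ℝ) * h2 + (1/3 : ℝ) * h3
end

section
/- Let Ω ⊆ ℝ be a nonempty open set, k a nonnegative integer, and D : C^k(Ω) → C(Ω) an operator satisfying the identity (★): D(f·g·h) − f·D(g·h) − g·D(f·h) − h·D(f·g) + f·g·D(h) + f·h·D(g) + g·h·D(f) = 0 for all f, g, h ∈ C^k(Ω). Then D(1) = 0 and D(−1) = 0 (where 1 and −1 are the constant functions), and D is localized on intervals: if J ⊆ Ω is open and f₁, f₂ ∈ C^k(Ω) satisfy f₁ = f₂ on J, then D(f₁) = D(f₂) on J. -/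
/-- If `D : C^k(Ω) → C(Ω)` satisfies the identity (★), then `D(1) = 0` and
`D(−1) = 0` (as elements of `C(Ω)`), and `D` is localized on intervals: if `J ⊆ Ω` is open
and `f₁, f₂ ∈ C^k(Ω)` agree on `J`, then `D(f₁)` and `D(f₂)` agree on `J`. -/
theorem statement7 (Ω : Set ℝ) (hΩ : IsOpen Ω) (hΩne : Ω.Nonempty) (k : ℕ)
    (D : (ℝ → ℝ) → (ℝ → ℝ))
    (hmap : ∀ f : ℝ → ℝ, ContDiffOn ℝ k f Ω → ContinuousOn (D f) Ω)
    (hstar : ∀ f g h : ℝ → ℝ,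
      ContDiffOn ℝ k f Ω → ContDiffOn ℝ k g Ω → ContDiffOn ℝ k h Ω →
      ∀ x ∈ Ω,
        D (fun y => f y * g y * h y) x
          - f x * D (fun y => g y * h y) x
          - g x * D (fun y => f y * h y) x
          - h x * D (fun y => f y * g y) x
          + f x * g x * D h x
          + f x * h x * D g x
          + g x * h x * D f x = 0) :
    (∀ x ∈ Ω, D (fun _ => (1 : ℝ)) x = 0) ∧
    (∀ x ∈ Ω, D (fun _ => (-1 : ℝ)) x = 0) ∧
    (∀ J : Set ℝ, IsOpen J → J ⊆ Ω →
      ∀ f₁ f₂ : ℝ → ℝ, ContDiffOn ℝ k f₁ Ω → ContDiffOn ℝ k f₂ Ω →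
        Set.EqOn f₁ f₂ J → Set.EqOn (D f₁) (D f₂) J) := by
  have hc1 : ContDiffOn ℝ k (fun _ : ℝ => (1 : ℝ)) Ω := contDiffOn_const
  have hcm1 : ContDiffOn ℝ k (fun _ : ℝ => (-1 : ℝ)) Ω := contDiffOn_const
  have hD1 : ∀ x ∈ Ω, D (fun _ => (1 : ℝ)) x = 0 := by
    intro x hx
    have h := hstar (fun _ => 1) (fun _ => 1) (fun _ => 1) hc1 hc1 hc1 x hx
    simp only [one_mul, mul_one] at h
    linarith
  refine ⟨hD1, ?_, ?_⟩
  · intro x hx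
    have h := hstar (fun _ => -1) (fun _ => -1) (fun _ => -1) hcm1 hcm1 hcm1 x hx
    have h1 := hD1 x hx
    norm_num at h
    linarith
  · intro J hJ hJΩ f₁ f₂ hf₁ hf₂ heq x hxJ
    have hxΩ : x ∈ Ω := hJΩ hxJ
    obtain ⟨ε, hε, hball⟩ := Metric.isOpen_iff.1 hJ x hxJ
    set c : ContDiffBump x := ⟨ε / 2, ε, by positivity, by linarith⟩
    set φ : ℝ → ℝ := fun y => c y with hφdef
    have hφc : ContDiffOn ℝ k φ Ω := c.contDiff.contDiffOn
    have hφx : φ x = 1 := c.one_of_mem_closedBall (Metric.mem_closedBall_self (by positivity))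
    have hsupp : ∀ y, y ∉ J → φ y = 0 := by
      intro y hy
      apply c.zero_of_le_dist
      by_contra hlt
      exact hy (hball (by simpa [Metric.mem_ball, dist_comm] using lt_of_not_ge hlt))
    have key : ∀ f : ℝ → ℝ, ContDiffOn ℝ k f Ω →
        D f x = - D (fun y => f y * φ y * φ y) x + f x * D (fun y => φ y * φ y) x
          + 2 * D (fun y => f y * φ y) x - 2 * f x * D φ x := by
      intro f hf
      have h := hstar f φ φ hf hφc hφc x hxΩ
      rw [hφx] at h
      linarith
    have hmul2 : (fun y => f₁ y * φ y) = (fun y => f₂ y * φ y) := by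
      funext y
      by_cases hy : y ∈ J
      · rw [heq hy]
      · rw [hsupp y hy]; ring
    have hmul3 : (fun y => f₁ y * φ y * φ y) = (fun y => f₂ y * φ y * φ y) := by
      funext y
      by_cases hy : y ∈ J
      · rw [heq hy]
      · rw [hsupp y hy]; ring
    rw [key f₁ hf₁, key f₂ hf₂, hmul2, hmul3, heq hxJ]
end

section
/- Let Ω ⊆ ℝ be a nonempty open set, k a nonnegative integer, and T : C^k(Ω) → C(Ω) an operator that is localized on intervals (if J ⊆ Ω is open and f₁, f₂ ∈ C^k(Ω) coincide on J, then T(f₁) and T(f₂) coincide on J). Then there exists a function F : Ω × ℝ^{k+1} → ℝ such that (Tf)(x) = F(x, f(x), f'(x), …, f^{(k)}(x)) for all x ∈ Ω and all f ∈ C^k(Ω). -/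
/-!
Glue two `C^k` functions `f`, `g` with the same `k`-jet at `x` into `h`, equal to `f` on
`(-∞, x]` and to `g` on `(x, ∞)`; `h` is again `C^k`. Locality gives `T f = T h` to the left
of `x` and `T g = T h` to the right, so continuity of `T f`, `T g`, `T h` at `x` yields
`T f x = T h x = T g x`: the value `T f x` depends only on `x` and the `k`-jet of `f` at `x`.
-/

open Set Filter Topology

section

variable {α : Type*} {f g : ℝ → α} {x : ℝ}

lemma ite_le_eqOn_Iic : EqOn (fun y => if y ≤ x then f y else g y) f (Iic x) :=
  fun _ hy => if_pos hy

lemma ite_le_eqOn_Ioi : EqOn (fun y => if y ≤ x then f y else g y) g (Ioi x) :=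
  fun _ hy => if_neg (not_le.2 hy)

lemma ite_le_eventuallyEq_left {y : ℝ} (hy : y < x) :
    (fun z => if z ≤ x then f z else g z) =ᶠ[𝓝 y] f :=
  eventuallyEq_of_mem (Iic_mem_nhds hy) ite_le_eqOn_Iic

lemma ite_le_eventuallyEq_right {y : ℝ} (hy : x < y) :
    (fun z => if z ≤ x then f z else g z) =ᶠ[𝓝 y] g :=
  eventuallyEq_of_mem (Ioi_mem_nhds hy) ite_le_eqOn_Ioi

lemma continuousAt_ite_le [TopologicalSpace α] (hf : ContinuousAt f x) (hg : ContinuousAt g x)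
    (hfg : f x = g x) :
    ContinuousAt (fun y => if y ≤ x then f y else g y) x := by
  have hl := hf.continuousWithinAt.congr (ite_le_eqOn_Iic (g := g)) (if_pos le_rfl)
  have hr := hg.continuousWithinAt.congr (ite_le_eqOn_Ioi (f := f)) ((if_pos le_rfl).trans hfg)
  rw [← continuousWithinAt_univ, ← Iic_union_Ioi]
  exact hl.union hr

lemma ContinuousOn.ite_le [TopologicalSpace α] {Ω : Set ℝ} (hΩ : IsOpen Ω)
    (hf : ContinuousOn f Ω) (hg : ContinuousOn g Ω) (hfg : f x = g x) :
    ContinuousOn (fun y => if y ≤ x then f y else g y) Ω := by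
  intro y hy
  refine ContinuousAt.continuousWithinAt ?_
  have hfy := hf.continuousAt (hΩ.mem_nhds hy)
  have hgy := hg.continuousAt (hΩ.mem_nhds hy)
  rcases lt_trichotomy y x with hlt | rfl | hgt
  · exact hfy.congr (ite_le_eventuallyEq_left hlt).symm
  · exact continuousAt_ite_le hfy hgy hfg
  · exact hgy.congr (ite_le_eventuallyEq_right hgt).symm

end

section

variable {E : Type*} [NormedAddCommGroup E] [NormedSpace ℝ E] {f g : ℝ → E} {x : ℝ}

lemma hasDerivAt_ite_le {d : E} (hf : HasDerivAt f d x) (hg : HasDerivAt g d x)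
    (hfg : f x = g x) : HasDerivAt (fun y => if y ≤ x then f y else g y) d x := by
  have hl := hf.hasDerivWithinAt.congr (ite_le_eqOn_Iic (g := g)) (if_pos le_rfl)
  have hr := hg.hasDerivWithinAt.congr (ite_le_eqOn_Ioi (f := f)) ((if_pos le_rfl).trans hfg)
  rw [← hasDerivWithinAt_univ, ← Iic_union_Ioi]
  exact hl.union hr

theorem ContDiffOn.ite_le {Ω : Set ℝ} (hΩ : IsOpen Ω) {n : ℕ}
    (hf : ContDiffOn ℝ n f Ω) (hg : ContDiffOn ℝ n g Ω)
    (hjet : ∀ i ≤ n, iteratedDeriv i f x = iteratedDeriv i g x) :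
    ContDiffOn ℝ n (fun y => if y ≤ x then f y else g y) Ω := by
  induction n generalizing f g with
  | zero =>
    rw [Nat.cast_zero, contDiffOn_zero] at hf hg ⊢
    exact hf.ite_le hΩ hg (by simpa using hjet 0 le_rfl)
  | succ n ih =>
    have hn : (n + 1 : ℕ) ≠ 0 := n.succ_ne_zero
    have hfd : ∀ y ∈ Ω, HasDerivAt f (deriv f y) y := fun y hy =>
      ((hf.contDiffAt (hΩ.mem_nhds hy)).differentiableAt (by exact_mod_cast hn)).hasDerivAt
    have hgd : ∀ y ∈ Ω, HasDerivAt g (deriv g y) y := fun y hy =>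
      ((hg.contDiffAt (hΩ.mem_nhds hy)).differentiableAt (by exact_mod_cast hn)).hasDerivAt
    have hderiv : ∀ y ∈ Ω, HasDerivAt (fun z => if z ≤ x then f z else g z)
        (if y ≤ x then deriv f y else deriv g y) y := by
      intro y hy
      rcases lt_trichotomy y x with hlt | rfl | hgt
      · rw [if_pos hlt.le]
        exact (hfd y hy).congr_of_eventuallyEq (ite_le_eventuallyEq_left hlt)
      · have hd : deriv f y = deriv g y := by simpa using hjet 1 (by omega)
        rw [if_pos le_rfl]
        exact hasDerivAt_ite_le (hfd y hy) (hd ▸ hgd y hy) (by simpa using hjet 0 (by omega))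
      · rw [if_neg (not_le.2 hgt)]
        exact (hgd y hy).congr_of_eventuallyEq (ite_le_eventuallyEq_right hgt)
    have hglued : ContDiffOn ℝ n (fun y => if y ≤ x then deriv f y else deriv g y) Ω :=
      ih (hf.deriv_of_isOpen hΩ le_rfl) (hg.deriv_of_isOpen hΩ le_rfl) fun i hi => by
        simpa only [iteratedDeriv_succ'] using hjet (i + 1) (by omega)
    rw [Nat.cast_succ, contDiffOn_succ_iff_deriv_of_isOpen hΩ]
    exact ⟨fun y hy => (hderiv y hy).differentiableAt.differentiableWithinAt, by simp,
      hglued.congr fun y hy => (hderiv y hy).deriv⟩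

end

section

variable {Ω : Set ℝ} {k : ℕ} {T : (ℝ → ℝ) → (ℝ → ℝ)}

lemma apply_eq_of_eqOn_inter (hΩ : IsOpen Ω)
    (hmap : ∀ f : ℝ → ℝ, ContDiffOn ℝ k f Ω → ContinuousOn (T f) Ω)
    (hloc : ∀ J : Set ℝ, IsOpen J → J ⊆ Ω →
      ∀ f₁ f₂ : ℝ → ℝ, ContDiffOn ℝ k f₁ Ω → ContDiffOn ℝ k f₂ Ω →
        Set.EqOn f₁ f₂ J → Set.EqOn (T f₁) (T f₂) J)
    {s : Set ℝ} (hs : IsOpen s) {x : ℝ} [(𝓝[s] x).NeBot] (hx : x ∈ Ω) {f g : ℝ → ℝ}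
    (hf : ContDiffOn ℝ k f Ω) (hg : ContDiffOn ℝ k g Ω) (hfg : EqOn f g (s ∩ Ω)) :
    T f x = T g x := by
  have hTfg : T f =ᶠ[𝓝[s] x] T g :=
    eventuallyEq_of_mem (inter_mem_nhdsWithin s (hΩ.mem_nhds hx))
      (hloc _ (hs.inter hΩ) inter_subset_right f g hf hg hfg)
  exact tendsto_nhds_unique_of_eventuallyEq
    (((hmap f hf).continuousAt (hΩ.mem_nhds hx)).tendsto.mono_left nhdsWithin_le_nhds)
    (((hmap g hg).continuousAt (hΩ.mem_nhds hx)).tendsto.mono_left nhdsWithin_le_nhds) hTfg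

lemma apply_eq_of_iteratedDeriv_eq (hΩ : IsOpen Ω)
    (hmap : ∀ f : ℝ → ℝ, ContDiffOn ℝ k f Ω → ContinuousOn (T f) Ω)
    (hloc : ∀ J : Set ℝ, IsOpen J → J ⊆ Ω →
      ∀ f₁ f₂ : ℝ → ℝ, ContDiffOn ℝ k f₁ Ω → ContDiffOn ℝ k f₂ Ω →
        Set.EqOn f₁ f₂ J → Set.EqOn (T f₁) (T f₂) J)
    {x : ℝ} (hx : x ∈ Ω) {f g : ℝ → ℝ} (hf : ContDiffOn ℝ k f Ω) (hg : ContDiffOn ℝ k g Ω)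
    (hjet : ∀ i ≤ k, iteratedDeriv i f x = iteratedDeriv i g x) :
    T f x = T g x := by
  have hh := hf.ite_le hΩ hg hjet
  calc T f x = T (fun y => if y ≤ x then f y else g y) x :=
        apply_eq_of_eqOn_inter hΩ hmap hloc isOpen_Iio hx hf hh
          fun y hy => (ite_le_eqOn_Iic (Iio_subset_Iic_self hy.1)).symm
    _ = T g x :=
        apply_eq_of_eqOn_inter hΩ hmap hloc isOpen_Ioi hx hh hg
          fun y hy => ite_le_eqOn_Ioi hy.1

end

theorem statement8_general (Ω : Set ℝ) (hΩ : IsOpen Ω) (k : ℕ)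
    (T : (ℝ → ℝ) → (ℝ → ℝ))
    (hmap : ∀ f : ℝ → ℝ, ContDiffOn ℝ k f Ω → ContinuousOn (T f) Ω)
    (hloc : ∀ J : Set ℝ, IsOpen J → J ⊆ Ω →
      ∀ f₁ f₂ : ℝ → ℝ, ContDiffOn ℝ k f₁ Ω → ContDiffOn ℝ k f₂ Ω →
        Set.EqOn f₁ f₂ J → Set.EqOn (T f₁) (T f₂) J) :
    ∃ F : ℝ → (Fin (k + 1) → ℝ) → ℝ,
      ∀ f : ℝ → ℝ, ContDiffOn ℝ k f Ω → ∀ x ∈ Ω,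
        T f x = F x (fun i => iteratedDeriv i f x) := by
  let jet (g : ℝ → ℝ) (x : ℝ) : Fin (k + 1) → ℝ := fun i => iteratedDeriv i g x
  refine ⟨fun x v => T (Classical.epsilon fun g => ContDiffOn ℝ k g Ω ∧ jet g x = v) x, ?_⟩
  intro f hf x hx
  obtain ⟨hg, hjet⟩ := Classical.epsilon_spec
    (p := fun g => ContDiffOn ℝ k g Ω ∧ jet g x = jet f x) ⟨f, hf, rfl⟩
  exact apply_eq_of_iteratedDeriv_eq hΩ hmap hloc hx hf hg fun i hi =>
    (congrFun hjet ⟨i, Nat.lt_succ_of_le hi⟩).symm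

/-- If `T : C^k(Ω) → C(Ω)` is localized on intervals, then there is a function
`F : Ω × ℝ^{k+1} → ℝ` (here defined on all of `ℝ × ℝ^{k+1}`) such that
`(Tf)(x) = F(x, f(x), f'(x), …, f^{(k)}(x))` for all `x ∈ Ω` and `f ∈ C^k(Ω)`. -/
theorem statement8 (Ω : Set ℝ) (hΩ : IsOpen Ω) (hΩne : Ω.Nonempty) (k : ℕ)
    (T : (ℝ → ℝ) → (ℝ → ℝ))
    (hmap : ∀ f : ℝ → ℝ, ContDiffOn ℝ k f Ω → ContinuousOn (T f) Ω)
    (hloc : ∀ J : Set ℝ, IsOpen J → J ⊆ Ω →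
      ∀ f₁ f₂ : ℝ → ℝ, ContDiffOn ℝ k f₁ Ω → ContDiffOn ℝ k f₂ Ω →
        Set.EqOn f₁ f₂ J → Set.EqOn (T f₁) (T f₂) J) :
    ∃ F : ℝ → (Fin (k + 1) → ℝ) → ℝ,
      ∀ f : ℝ → ℝ, ContDiffOn ℝ k f Ω → ∀ x ∈ Ω,
        T f x = F x (fun i => iteratedDeriv i f x) :=
  statement8_general Ω hΩ k T hmap hloc
end

section
/- Let k and m be nonnegative integers and f : ℝ^{k+1} → ℝ a function such that there exist functions g₁, …, g_{m+1} : (ℝ^{k+1})^m → ℝ with f(x₁ + ⋯ + x_{m+1}) = Σ_{i=1}^{m+1} g_i(x₁, …, x_{i−1}, x_{i+1}, …, x_{m+1}) for all x₁, …, x_{m+1} ∈ ℝ^{k+1} (each g_i omitting the variable x_i). If f is continuous at some point x* ∈ ℝ^{k+1}, then f is an ordinary polynomial in k+1 real variables of total degree at most m. -/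
/-!
Taking a forward difference `Δ_v` in the last variable turns the functional equation for `f` with
`m + 1` variables into one of the same shape for `Δ_v f` with `m` variables, so
`Δ_v^[m + 1] f = 0` for every `v`. By the Gregory–Newton formula, `f` then agrees on the rational
points of every line with a polynomial of degree at most `m`. Lagrange interpolation at the nodes
`0, …, m` turns a bound for `f` near `x₀` into a bound on every ball, and a local bound into
continuity, so `f` is continuous. On every line `f` is then a polynomial of degree at most `m`;
interpolating one coordinate at a time makes `f` a multivariate polynomial, and its homogeneous
components of degree above `m` vanish because they are the top coefficients along lines through `0`.
-/

open fwdDiff Finset Polynomial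

section FunctionalEquation

variable {V G : Type*} [AddCommGroup V] [AddCommGroup G]

theorem fwdDiff_iterate_eq_zero_of_eq_sum_omitting {m : ℕ} {f : V → G}
    {g : Fin (m + 1) → (Fin (m + 1) → V) → G}
    (hg : ∀ i x y, (∀ j, j ≠ i → x j = y j) → g i x = g i y)
    (heq : ∀ x, f (∑ j, x j) = ∑ i, g i x) (v a : V) : (Δ_[v])^[m + 1] f a = 0 := by
  induction m generalizing f with
  | zero =>
    have hconst : ∀ w, f w = g 0 0 := fun w => by
      have h := heq fun _ => w
      rw [Fin.sum_univ_one, Fin.sum_univ_one] at h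
      exact h.trans (hg 0 _ 0 fun j hj => absurd (Fin.eq_zero j) hj)
    simp [fwdDiff, hconst]
  | succ m ih =>
    rw [Function.iterate_succ_apply]
    refine ih (g := fun i x => g i.castSucc (Fin.snoc x v) - g i.castSucc (Fin.snoc x 0)) ?_ ?_
    · intro i x y hxy
      have key : ∀ w, g i.castSucc (Fin.snoc x w) = g i.castSucc (Fin.snoc y w) := fun w =>
        hg _ _ _ fun j hj => by
          induction j using Fin.lastCases with
          | last => simp
          | cast j => simpa using hxy j (fun h => hj (h ▸ rfl))
      simp only [key]
    · intro x
      -- the last summand ignores the last variable, so it cancels in `Δ_v f`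
      have hlast : g (Fin.last _) (Fin.snoc x v) = g (Fin.last _) (Fin.snoc x 0) :=
        hg _ _ _ fun j hj => by
          obtain ⟨j, rfl⟩ := Fin.eq_castSucc_of_ne_last hj
          simp
      have hsum : ∀ w, ∑ j, Fin.snoc x w j = ∑ j, x j + w := fun w => by
        simp [Fin.sum_univ_castSucc]
      have e1 := heq (Fin.snoc x v)
      have e2 := heq (Fin.snoc x 0)
      rw [hsum, Fin.sum_univ_castSucc (f := fun i => g i _)] at e1 e2
      rw [add_zero] at e2
      rw [fwdDiff, e1, e2, hlast, Finset.sum_sub_distrib]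
      abel

end FunctionalEquation

section Newton

variable {M G : Type*} [AddCommMonoid M] [AddCommGroup G] {h : M} {f : M → G} {m : ℕ}

lemma fwdDiff_iterate_eq_zero_of_le (hf : ∀ x, (Δ_[h])^[m] f x = 0) {k : ℕ} (hk : m ≤ k)
    (x : M) : (Δ_[h])^[k] f x = 0 := by
  obtain ⟨j, rfl⟩ := Nat.exists_eq_add_of_le hk
  rw [add_comm, Function.iterate_add_apply, funext hf,
    Function.iterate_fixed (fwdDiff_const h 0)]

theorem shift_eq_sum_range_fwdDiff_iter (hf : ∀ x, (Δ_[h])^[m + 1] f x = 0) (y : M) (n : ℕ) :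
    f (y + n • h) = ∑ k ∈ range (m + 1), n.choose k • (Δ_[h])^[k] f y := by
  have hn : range (n + 1) ⊆ range (n + m + 1) := range_subset_range.2 (by omega)
  have hm : range (m + 1) ⊆ range (n + m + 1) := range_subset_range.2 (by omega)
  rw [shift_eq_sum_fwdDiff_iter h f n y, sum_subset hn fun k _ hk => ?_,
    sum_subset hm fun k _ hk => ?_]
  · rw [fwdDiff_iterate_eq_zero_of_le hf (by simpa using hk), smul_zero]
  · rw [Nat.choose_eq_zero_of_lt (by simpa using hk), zero_smul]

end Newton

lemma Rat.exists_eq_neg_add_mul_inv (t : ℚ) :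
    ∃ c j N : ℕ, 0 < N ∧ t = -c + j * (N : ℚ)⁻¹ := by
  obtain ⟨j, hj⟩ := Int.eq_ofNat_of_zero_le (a := t.num + t.num.natAbs * t.den) (by
    have := Int.le_natAbs (a := -t.num)
    rw [Int.natAbs_neg] at this
    nlinarith [t.den_pos])
  refine ⟨t.num.natAbs, j, t.den, t.den_pos, ?_⟩
  have hj' := congrArg (Int.cast : ℤ → ℚ) hj
  have hden : (t.den : ℚ) ≠ 0 := by positivity
  push_cast [Nat.cast_natAbs] at hj' ⊢
  rw [← hj']
  nth_rw 1 [← Rat.num_div_den t]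
  field_simp
  ring

variable {K : Type*} [Field K]

noncomputable def newtonPolynomial (φ : K → K) (m : ℕ) (b h : K) : K[X] :=
  ∑ k ∈ range (m + 1),
    C ((Δ_[h])^[k] φ b / k.factorial) * (descPochhammer K k).comp (C h⁻¹ * (X - C b))

lemma natDegree_newtonPolynomial_le (φ : K → K) (m : ℕ) (b h : K) :
    (newtonPolynomial φ m b h).natDegree ≤ m := by
  refine natDegree_sum_le_of_forall_le _ _ fun k hk => (natDegree_C_mul_le _ _).trans ?_
  refine natDegree_comp_le.trans ?_
  rw [descPochhammer_natDegree]
  calc k * (C h⁻¹ * (X - C b)).natDegree ≤ k * 1 :=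
        Nat.mul_le_mul_left k ((natDegree_C_mul_le _ _).trans (natDegree_X_sub_C_le _))
    _ ≤ m := by simpa [Nat.lt_succ_iff] using hk

lemma newtonPolynomial_eval [CharZero K] {φ : K → K} {m : ℕ} {h : K}
    (hφ : ∀ x, (Δ_[h])^[m + 1] φ x = 0) (hh : h ≠ 0) (b : K) (n : ℕ) :
    (newtonPolynomial φ m b h).eval (b + n * h) = φ (b + n * h) := by
  rw [← nsmul_eq_mul, shift_eq_sum_range_fwdDiff_iter hφ, newtonPolynomial, eval_finsetSum]
  refine sum_congr rfl fun k _ => ?_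
  have hk : (k.factorial : K) ≠ 0 := Nat.cast_ne_zero.2 k.factorial_ne_zero
  have harg : h⁻¹ * (b + n • h - b) = n := by rw [nsmul_eq_mul]; field_simp; ring
  rw [eval_mul, eval_C, eval_comp, eval_mul, eval_C, eval_sub, eval_X, eval_C, harg,
    descPochhammer_eval_eq_descFactorial, Nat.descFactorial_eq_factorial_mul_choose, nsmul_eq_mul]
  push_cast
  field_simp

lemma exists_polynomial_eq_on_rat [CharZero K] {φ : K → K} {m : ℕ}
    (hφ : ∀ h x, (Δ_[h])^[m + 1] φ x = 0) :
    ∃ p : K[X], p.natDegree ≤ m ∧ ∀ t : ℚ, φ t = p.eval (t : K) := by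
  refine ⟨newtonPolynomial φ m 0 1, natDegree_newtonPolynomial_le .., fun t => ?_⟩
  obtain ⟨c, j, N, hN, rfl⟩ := Rat.exists_eq_neg_add_mul_inv t
  have hN0 : (N : K) ≠ 0 := Nat.cast_ne_zero.2 hN.ne'
  have hN' : (N : K)⁻¹ ≠ 0 := inv_ne_zero hN0
  -- both Newton polynomials interpolate `φ` at every natural number
  have key : newtonPolynomial φ m (-c) (N : K)⁻¹ = newtonPolynomial φ m 0 1 := by
    refine eq_of_infinite_eval_eq _ _
      (Set.infinite_of_injective_forall_mem Nat.cast_injective fun n : ℕ => ?_)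
    have e1 := newtonPolynomial_eval (hφ _) hN' (-c) ((n + c) * N)
    have e2 := newtonPolynomial_eval (hφ _) one_ne_zero 0 n
    have hn : -(c : K) + ((n + c) * N : ℕ) * (N : K)⁻¹ = n := by
      push_cast
      field_simp
      ring
    rw [hn] at e1
    rw [zero_add, mul_one] at e2
    exact e1.trans e2.symm
  push_cast
  rw [← key, newtonPolynomial_eval (hφ _) hN']

section Line

variable {E : Type*} [AddCommGroup E] [Module K E]

lemma fwdDiff_iterate_comp_line {G : Type*} [AddCommGroup G] (f : E → G) (a v : E) (s t : K)
    (j : ℕ) : (Δ_[s])^[j] (fun u : K => f (a + u • v)) t = (Δ_[s • v])^[j] f (a + t • v) := by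
  simp [fwdDiff_iter_eq_sum_shift, add_smul, add_assoc, mul_smul, Nat.cast_smul_eq_nsmul]

lemma exists_polynomial_eq_on_rat_line [CharZero K] {f : E → K} {m : ℕ}
    (hf : ∀ v a, (Δ_[v])^[m + 1] f a = 0) (a v : E) :
    ∃ q : K[X], q.natDegree ≤ m ∧ ∀ t : ℚ, f (a + (t : K) • v) = q.eval (t : K) :=
  exists_polynomial_eq_on_rat fun s t => by rw [fwdDiff_iterate_comp_line f]; exact hf _ _

end Line

variable (K) in
noncomputable def natLagrangeBasis (m i : ℕ) : K[X] :=
  Lagrange.basis (range (m + 1)) (fun j : ℕ => (j : K)) i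

lemma eval_eq_sum_natLagrangeBasis [CharZero K] {q : K[X]} {m : ℕ} (hq : q.natDegree ≤ m)
    (t : K) :
    q.eval t = ∑ i ∈ range (m + 1), q.eval (i : K) * (natLagrangeBasis K m i).eval t := by
  have hinj : Set.InjOn (fun j : ℕ => (j : K)) (range (m + 1)) := Nat.cast_injective.injOn
  have hdeg : q.degree < #(range (m + 1)) := by
    rw [card_range]
    exact degree_le_natDegree.trans_lt (by exact_mod_cast Nat.lt_succ_of_le hq)
  conv_lhs => rw [Lagrange.eq_interpolate hinj hdeg]
  simp [Lagrange.interpolate_apply, eval_finsetSum, natLagrangeBasis]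

lemma eq_sum_natLagrangeBasis_on_line [CharZero K] {E : Type*} [AddCommGroup E] [Module K E]
    {f : E → K} {m : ℕ} (hf : ∀ v a, (Δ_[v])^[m + 1] f a = 0) (a v : E) (t : ℚ) :
    f (a + (t : K) • v) =
      ∑ i ∈ range (m + 1), f (a + (i : K) • v) * (natLagrangeBasis K m i).eval (t : K) := by
  obtain ⟨q, hq, hqt⟩ := exists_polynomial_eq_on_rat_line hf a v
  rw [hqt, eval_eq_sum_natLagrangeBasis hq]
  refine sum_congr rfl fun i _ => ?_
  rw [← Rat.cast_natCast, ← hqt]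

section Normed

variable {E : Type*} [NormedAddCommGroup E] [NormedSpace ℝ E] {f : E → ℝ} {m : ℕ}

lemma add_natCast_smul_mem_closedBall (a : E) {v : E} {r : ℝ} (hv : m * ‖v‖ ≤ r) {i : ℕ}
    (hi : i ∈ range (m + 1)) : a + (i : ℝ) • v ∈ Metric.closedBall a r := by
  rw [Metric.mem_closedBall, dist_eq_norm, add_sub_cancel_left, norm_smul, Real.norm_natCast]
  refine le_trans (mul_le_mul_of_nonneg_right ?_ (norm_nonneg v)) hv
  exact_mod_cast Nat.lt_succ_iff.1 (mem_range.1 hi)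

lemma abs_le_of_bound_on_nodes (hf : ∀ v a, (Δ_[v])^[m + 1] f a = 0) {a v : E} {M : ℝ}
    (hM : ∀ i ∈ range (m + 1), |f (a + (i : ℝ) • v)| ≤ M) (t : ℚ) :
    |f (a + (t : ℝ) • v)| ≤ M * ∑ i ∈ range (m + 1), |(natLagrangeBasis ℝ m i).eval (t : ℝ)| := by
  rw [eq_sum_natLagrangeBasis_on_line hf, mul_sum]
  refine (abs_sum_le_sum_abs _ _).trans (sum_le_sum fun i hi => ?_)
  rw [abs_mul]
  exact mul_le_mul_of_nonneg_right (hM i hi) (abs_nonneg _)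

lemma abs_sub_le_of_bound_on_nodes (hf : ∀ v a, (Δ_[v])^[m + 1] f a = 0) {a v : E} {M : ℝ}
    (hM : ∀ i ∈ range (m + 1), |f (a + (i : ℝ) • v)| ≤ M) (t : ℚ) :
    |f (a + (t : ℝ) • v) - f a| ≤ M * ∑ i ∈ range (m + 1),
      |(natLagrangeBasis ℝ m i).eval (t : ℝ) - (natLagrangeBasis ℝ m i).eval 0| := by
  have h0 := eq_sum_natLagrangeBasis_on_line hf a v 0
  rw [Rat.cast_zero, zero_smul, add_zero] at h0
  rw [eq_sum_natLagrangeBasis_on_line hf, h0, ← sum_sub_distrib, mul_sum]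
  refine (abs_sum_le_sum_abs _ _).trans (sum_le_sum fun i hi => ?_)
  rw [← mul_sub, abs_mul]
  exact mul_le_mul_of_nonneg_right (hM i hi) (abs_nonneg _)

lemma exists_bound_closedBall_of_bound (hf : ∀ v a, (Δ_[v])^[m + 1] f a = 0) {x₀ : E} {r M : ℝ}
    (hr : 0 < r) (hM : ∀ y ∈ Metric.closedBall x₀ r, |f y| ≤ M) (R : ℝ) :
    ∃ M', ∀ y ∈ Metric.closedBall x₀ R, |f y| ≤ M' := by
  obtain ⟨N, hN⟩ := exists_nat_gt (max (m * R / r) 0)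
  have hN0 : (0 : ℝ) < N := (le_max_right _ _).trans_lt hN
  refine ⟨M * ∑ i ∈ range (m + 1), |(natLagrangeBasis ℝ m i).eval (N : ℝ)|, fun y hy => ?_⟩
  -- write `y = x₀ + N • w`, with `w` so short that the nodes `x₀ + i • w` stay in the small ball
  set w : E := (N : ℝ)⁻¹ • (y - x₀)
  have hy' : y = x₀ + ((N : ℚ) : ℝ) • w := by
    simp [w, smul_smul, hN0.ne']
  have hw : m * ‖w‖ ≤ r := by
    rw [Metric.mem_closedBall, dist_eq_norm] at hy
    have hmR : m * R < N * r := by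
      have := (le_max_left _ _).trans_lt hN
      rwa [div_lt_iff₀ hr] at this
    calc m * ‖w‖ = m * ‖y - x₀‖ / N := by
          rw [norm_smul, norm_inv, Real.norm_natCast]; field_simp
      _ ≤ m * R / N := by gcongr
      _ ≤ r := by rw [div_le_iff₀ hN0]; linarith
  rw [hy']
  simpa using abs_le_of_bound_on_nodes hf
    (fun i hi => hM _ (add_natCast_smul_mem_closedBall x₀ hw hi)) N

lemma exists_rat_smul_eq (u : E) {c : ℝ} (hc : 0 < c) :
    ∃ (τ : ℚ) (v : E), (τ : ℝ) • v = u ∧ ‖v‖ ≤ c ∧ |(τ : ℝ)| ≤ 2 * ‖u‖ / c := by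
  rcases eq_or_ne u 0 with rfl | hu
  · exact ⟨0, 0, by simp, by simp [hc.le], by simp⟩
  have hu' : 0 < ‖u‖ := norm_pos_iff.2 hu
  obtain ⟨τ, hτ₁, hτ₂⟩ := exists_rat_btwn (show ‖u‖ / c < 2 * ‖u‖ / c by gcongr; linarith)
  have hτ : (0 : ℝ) < τ := (by positivity : (0 : ℝ) < ‖u‖ / c).trans hτ₁
  refine ⟨τ, (τ : ℝ)⁻¹ • u, by simp [smul_smul, hτ.ne'], ?_, by rw [abs_of_pos hτ]; exact hτ₂.le⟩
  rw [norm_smul, norm_inv, Real.norm_of_nonneg hτ.le, inv_mul_le_iff₀ hτ]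
  rw [div_lt_iff₀ hc] at hτ₁
  linarith

lemma continuousAt_of_bound (hf : ∀ v a, (Δ_[v])^[m + 1] f a = 0) {a : E} {r M : ℝ} (hr : 0 < r)
    (hM : ∀ y ∈ Metric.closedBall a r, |f y| ≤ M) : ContinuousAt f a := by
  set ω : ℝ → ℝ := fun τ => ∑ i ∈ range (m + 1),
    |(natLagrangeBasis ℝ m i).eval τ - (natLagrangeBasis ℝ m i).eval 0|
  have hω : ContinuousAt ω 0 := by fun_prop
  have hω0 : ω 0 = 0 := by simp [ω]
  rw [Metric.continuousAt_iff]
  intro ε hε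
  obtain ⟨δ, hδ, hωδ⟩ := Metric.continuousAt_iff.1 hω (ε / (|M| + 1)) (by positivity)
  refine ⟨δ * r / (2 * (m + 1)), by positivity, fun y hy => ?_⟩
  obtain ⟨τ, v, hτv, hv, hτ⟩ := exists_rat_smul_eq (y - a) (c := r / (m + 1)) (by positivity)
  have hmv : m * ‖v‖ ≤ r :=
    calc m * ‖v‖ ≤ (m + 1) * (r / (m + 1)) := by gcongr; linarith
      _ = r := by field_simp
  have hτδ : dist (τ : ℝ) 0 < δ := by
    rw [Real.dist_0_eq_abs]
    refine hτ.trans_lt ?_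
    rw [dist_eq_norm] at hy
    calc 2 * ‖y - a‖ / (r / (m + 1)) < 2 * (δ * r / (2 * (m + 1))) / (r / (m + 1)) := by gcongr
      _ = δ := by field_simp
  have hωτ : ω τ < ε / (|M| + 1) := by
    have := hωδ hτδ
    rw [hω0, Real.dist_0_eq_abs] at this
    exact (le_abs_self _).trans_lt this
  rw [Real.dist_eq, ← add_sub_cancel a y, ← hτv]
  calc |f (a + (τ : ℝ) • v) - f a| ≤ M * ω τ := abs_sub_le_of_bound_on_nodes hf
        (fun i hi => hM _ (add_natCast_smul_mem_closedBall a hmv hi)) τ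
    _ ≤ |M| * (ε / (|M| + 1)) := by
        gcongr
        exact le_abs_self M
    _ < ε := by
        rw [mul_div_assoc', div_lt_iff₀ (by positivity)]
        nlinarith [abs_nonneg M]

theorem continuous_of_continuousAt (hf : ∀ v a, (Δ_[v])^[m + 1] f a = 0) {x₀ : E}
    (hc : ContinuousAt f x₀) : Continuous f := by
  obtain ⟨δ, hδ, hball⟩ := Metric.continuousAt_iff.1 hc 1 one_pos
  have hM : ∀ y ∈ Metric.closedBall x₀ (δ / 2), |f y| ≤ |f x₀| + 1 := fun y hy => by
    have := hball (lt_of_le_of_lt hy (half_lt_self hδ))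
    rw [Real.dist_eq] at this
    linarith [abs_sub_abs_le_abs_sub (f y) (f x₀)]
  refine continuous_iff_continuousAt.2 fun a => ?_
  obtain ⟨M, hM'⟩ := exists_bound_closedBall_of_bound hf (half_pos hδ) hM (dist a x₀ + 1)
  refine continuousAt_of_bound hf one_pos fun y hy => hM' y ?_
  rw [Metric.mem_closedBall] at hy ⊢
  linarith [dist_triangle y a x₀]

lemma exists_polynomial_eq_on_line (hf : ∀ v a, (Δ_[v])^[m + 1] f a = 0) (hc : Continuous f)
    (a v : E) : ∃ q : ℝ[X], q.natDegree ≤ m ∧ ∀ t : ℝ, f (a + t • v) = q.eval t := by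
  obtain ⟨q, hq, hqt⟩ := exists_polynomial_eq_on_rat_line hf a v
  refine ⟨q, hq, congrFun (Continuous.ext_on Rat.denseRange_cast (by fun_prop) q.continuous ?_)⟩
  rintro _ ⟨t, rfl⟩
  exact hqt t

end Normed

lemma MvPolynomial.eval_aeval_X {σ R : Type*} [CommSemiring R] (x : σ → R) (i : σ) (p : R[X]) :
    MvPolynomial.eval x (Polynomial.aeval (MvPolynomial.X i) p) = p.eval (x i) := by
  induction p using Polynomial.induction_on' with
  | add p q hp hq => simp [hp, hq]
  | monomial n a => simp

theorem exists_mvPolynomial_eq_of_forall_line [CharZero K] {n m : ℕ} {F : (Fin n → K) → K}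
    (hF : ∀ a v : Fin n → K, ∃ q : K[X], q.natDegree ≤ m ∧ ∀ t, F (a + t • v) = q.eval t) :
    ∃ P : MvPolynomial (Fin n) K, ∀ x, F x = MvPolynomial.eval x P := by
  induction n with
  | zero => exact ⟨MvPolynomial.C (F 0), fun x => by simp [Subsingleton.elim x 0]⟩
  | succ n ih =>
    have hslice : ∀ c : ℕ, ∃ P : MvPolynomial (Fin n) K,
        ∀ y, F (Fin.cons (c : K) y) = MvPolynomial.eval y P := fun c => ih fun a v => by
      obtain ⟨q, hq, hqt⟩ := hF (Fin.cons (c : K) a) (Fin.cons 0 v)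
      refine ⟨q, hq, fun t => ?_⟩
      rw [← hqt]
      congr 1
      ext i
      cases i using Fin.cases <;> simp
    choose P hP using hslice
    refine ⟨∑ c ∈ range (m + 1),
      aeval (MvPolynomial.X 0) (natLagrangeBasis K m c) * MvPolynomial.rename Fin.succ (P c),
      fun x => ?_⟩
    obtain ⟨q, hq, hqt⟩ := hF (Fin.cons 0 (Fin.tail x)) (Pi.single 0 1)
    have hline : ∀ t : K,
        Fin.cons 0 (Fin.tail x) + t • Pi.single 0 1 = Fin.cons t (Fin.tail x) := by
      intro t
      ext i
      cases i using Fin.cases <;> simp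
    calc F x = q.eval (x 0) := by rw [← hqt, hline, Fin.cons_self_tail]
      _ = ∑ c ∈ range (m + 1), q.eval (c : K) * (natLagrangeBasis K m c).eval (x 0) :=
        eval_eq_sum_natLagrangeBasis hq _
      _ = _ := by
        rw [map_sum]
        refine sum_congr rfl fun c _ => ?_
        rw [map_mul, MvPolynomial.eval_rename, MvPolynomial.eval_aeval_X, ← hqt, hline, hP,
          mul_comm]
        rfl

lemma MvPolynomial.IsHomogeneous.eval_smul {σ R : Type*} [CommSemiring R] {P : MvPolynomial σ R}
    {d : ℕ} (hP : P.IsHomogeneous d) (t : R) (v : σ → R) :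
    MvPolynomial.eval (t • v) P = t ^ d * MvPolynomial.eval v P := by
  rw [MvPolynomial.eval_eq, MvPolynomial.eval_eq, mul_sum]
  refine sum_congr rfl fun s hs => ?_
  simp_rw [Pi.smul_apply, smul_eq_mul, mul_pow, prod_mul_distrib, prod_pow_eq_pow_sum,
    ← hP.degree_eq_sum_deg_support hs]
  ring

theorem MvPolynomial.totalDegree_le_of_forall_line [Infinite K] {σ : Type*}
    {P : MvPolynomial σ K} {m : ℕ}
    (h : ∀ v : σ → K, ∃ q : K[X], q.natDegree ≤ m ∧ ∀ t, eval (t • v) P = q.eval t) :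
    P.totalDegree ≤ m := by
  -- the coefficient of `t ^ d` in `t ↦ eval (t • v) P` is the value at `v` of the degree `d` part
  have hcomp : ∀ d, m < d → homogeneousComponent d P = 0 := by
    intro d hd
    refine funext fun v => ?_
    obtain ⟨q, hq, hqt⟩ := h v
    have hA : ∑ e ∈ range (P.totalDegree + 1),
        Polynomial.C (eval v (homogeneousComponent e P)) * Polynomial.X ^ e = q := by
      refine Polynomial.funext fun t => ?_
      rw [← hqt]
      conv_rhs => rw [← sum_homogeneousComponent P]
      simp only [eval_finsetSum, Polynomial.eval_mul, Polynomial.eval_C, Polynomial.eval_pow,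
        Polynomial.eval_X, map_sum, (homogeneousComponent_isHomogeneous _ _).eval_smul]
      exact sum_congr rfl fun _ _ => mul_comm _ _
    have := congrArg (Polynomial.coeff · d) hA
    simp only [finsetSum_coeff, coeff_C_mul_X_pow, sum_ite_eq, mem_range] at this
    rw [map_zero, ← coeff_eq_zero_of_natDegree_lt (hq.trans_lt hd), ← this]
    split_ifs with hdP
    · rfl
    · rw [homogeneousComponent_eq_zero _ _ (by omega), map_zero]
  refine Finset.sup_le fun s hs => ?_
  by_contra hlt
  have := congrArg (coeff s) (hcomp _ (not_le.1 hlt))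
  simp only [coeff_homogeneousComponent, coeff_zero, ite_eq_right_iff] at this
  exact mem_support_iff.1 hs (this rfl)

/-- (Aichinger-type corollary.) Let `f : ℝ^{k+1} → ℝ` satisfy
`f(x₁ + ⋯ + x_{m+1}) = Σᵢ gᵢ(x₁, …, x̂ᵢ, …, x_{m+1})`, where each `gᵢ` does not depend on the
`i`-th variable. If `f` is continuous at some point, then `f` is an ordinary polynomial in
`k+1` variables of total degree at most `m`. -/
theorem statement10 (k m : ℕ) (f : (Fin (k + 1) → ℝ) → ℝ)
    (g : Fin (m + 1) → (Fin (m + 1) → Fin (k + 1) → ℝ) → ℝ)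
    (hg : ∀ (i : Fin (m + 1)) (x y : Fin (m + 1) → Fin (k + 1) → ℝ),
      (∀ j : Fin (m + 1), j ≠ i → x j = y j) → g i x = g i y)
    (heq : ∀ x : Fin (m + 1) → Fin (k + 1) → ℝ, f (∑ j, x j) = ∑ i, g i x)
    (x₀ : Fin (k + 1) → ℝ) (hcont : ContinuousAt f x₀) :
    ∃ p : MvPolynomial (Fin (k + 1)) ℝ,
      p.totalDegree ≤ m ∧ ∀ v : Fin (k + 1) → ℝ, f v = MvPolynomial.eval v p := by
  have hΔ := fwdDiff_iterate_eq_zero_of_eq_sum_omitting hg heq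
  have hline := exists_polynomial_eq_on_line hΔ (continuous_of_continuousAt hΔ hcont)
  obtain ⟨P, hP⟩ := exists_mvPolynomial_eq_of_forall_line hline
  refine ⟨P, MvPolynomial.totalDegree_le_of_forall_line fun v => ?_, hP⟩
  obtain ⟨q, hq, hqt⟩ := hline 0 v
  exact ⟨q, hq, fun t => by rw [← hP, ← hqt, zero_add]⟩
end

section
/- Let k be a nonnegative integer with k ≥ 2, Ω ⊆ ℝ a nonempty open set, and c₀, c₁, c₂, d₀₀ : Ω → ℝ continuous functions. Define D : C^k(Ω) → C(Ω) by D(f)(x) = c₀(x)·f(x)·ln|f(x)| + c₁(x)·f'(x) + c₂(x)·f''(x) + d₀₀(x)·f(x)·(ln|f(x)|)² (with the conventions 0·ln 0 = 0 and 0·(ln 0)² = 0). Then D maps C^k(Ω) into C(Ω) and satisfies the identity (★): D(f·g·h) − f·D(g·h) − g·D(f·h) − h·D(f·g) + f·g·D(h) + f·h·D(g) + g·h·D(f) = 0 for all f, g, h ∈ C^k(Ω). -/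
/-!
Both sides of (★) are linear in `D`, so it suffices to check (★) for each of the four building
blocks. For `f ↦ f·ψ(ln|f|)`, multiplicativity of `|·|` turns (★) at a point where `f, g, h ≠ 0`
into `fgh` times the second difference
`ψ(u+v+w) − ψ(v+w) − ψ(u+w) − ψ(u+v) + ψ(u) + ψ(v) + ψ(w)`, which vanishes for `ψ(u) = u` and
`ψ(u) = u²`. For `f ↦ f'` and `f ↦ f''` (★) follows from the Leibniz rule.
-/

open Real Filter Topology

namespace Real

theorem continuous_mul_log_sq : Continuous fun t : ℝ => t * log t ^ 2 := by
  refine continuous_iff_continuousAt.2 fun t => ?_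
  rcases ne_or_eq t 0 with ht | rfl
  · exact continuousAt_id.mul ((continuousAt_log ht).pow 2)
  -- `|t| log² t = (2 √|t| log √|t|)²`, and `s log s → 0` as `s → 0`.
  have hbound : ∀ t : ℝ, ‖t * log t ^ 2‖ = (2 * (√|t| * log √|t|)) ^ 2 := fun t => by
    rw [norm_mul, norm_pow, norm_eq_abs, norm_eq_abs, sq_abs, log_sqrt (abs_nonneg t), log_abs,
      mul_pow, mul_pow, sq_sqrt (abs_nonneg t)]
    ring
  have hlim : Tendsto (fun t : ℝ => (2 * (√|t| * log √|t|)) ^ 2) (𝓝 0) (𝓝 0) := by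
    have : Continuous fun t : ℝ => (2 * (√|t| * log √|t|)) ^ 2 := by fun_prop
    simpa using this.tendsto 0
  simpa [ContinuousAt] using squeeze_zero_norm (fun t => (hbound t).le) hlim

end Real

section StarDefect
variable {α R : Type*} [CommRing R]

/-- The left-hand side of (★) at `x`. -/
def starDefect (D : (α → R) → α → R) (f g h : α → R) (x : α) : R :=
  D (fun y => f y * g y * h y) x
    - f x * D (fun y => g y * h y) x
    - g x * D (fun y => f y * h y) x
    - h x * D (fun y => f y * g y) x
    + f x * g x * D h x
    + f x * h x * D g x
    + g x * h x * D f x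

end StarDefect

section LogTerms
variable {α : Type*}

theorem starDefect_mul_comp_log_abs (ψ : ℝ → ℝ) (f g h : α → ℝ) (x : α) :
    starDefect (fun f y => f y * ψ (log |f y|)) f g h x =
      f x * g x * h x * (ψ (log |f x| + log |g x| + log |h x|) - ψ (log |g x| + log |h x|)
        - ψ (log |f x| + log |h x|) - ψ (log |f x| + log |g x|)
        + ψ (log |f x|) + ψ (log |g x|) + ψ (log |h x|)) := by
  unfold starDefect
  rcases eq_or_ne (f x) 0 with hf | hf; · simp [hf]
  rcases eq_or_ne (g x) 0 with hg | hg; · simp [hg]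
  rcases eq_or_ne (h x) 0 with hh | hh; · simp [hh]
  simp only [abs_mul, log_mul (abs_ne_zero.2 hf) (abs_ne_zero.2 hg),
    log_mul (abs_ne_zero.2 hf) (abs_ne_zero.2 hh), log_mul (abs_ne_zero.2 hg) (abs_ne_zero.2 hh),
    log_mul (mul_ne_zero (abs_ne_zero.2 hf) (abs_ne_zero.2 hg)) (abs_ne_zero.2 hh)]
  ring

theorem starDefect_mul_log_abs (f g h : α → ℝ) (x : α) :
    starDefect (fun f y => f y * log |f y|) f g h x = 0 :=
  (starDefect_mul_comp_log_abs id f g h x).trans (by simp only [id]; ring)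

theorem starDefect_mul_log_abs_sq (f g h : α → ℝ) (x : α) :
    starDefect (fun f y => f y * log |f y| ^ 2) f g h x = 0 :=
  (starDefect_mul_comp_log_abs (· ^ 2) f g h x).trans (by ring)

end LogTerms

section Derivatives
variable {𝕜 : Type*} [NontriviallyNormedField 𝕜] {f g h : 𝕜 → 𝕜} {x : 𝕜}

theorem starDefect_deriv (hf : DifferentiableAt 𝕜 f x) (hg : DifferentiableAt 𝕜 g x)
    (hh : DifferentiableAt 𝕜 h x) : starDefect deriv f g h x = 0 := by
  simp only [starDefect, deriv_fun_mul (hf.fun_mul hg) hh, deriv_fun_mul hf hg,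
    deriv_fun_mul hf hh, deriv_fun_mul hg hh]
  ring

theorem deriv_deriv_fun_mul (hf : ContDiffAt 𝕜 2 f x) (hg : ContDiffAt 𝕜 2 g x) :
    deriv (deriv fun y => f y * g y) x
      = deriv (deriv f) x * g x + 2 * deriv f x * deriv g x + f x * deriv (deriv g) x := by
  have h := iteratedDeriv_fun_mul hf hg
  simp only [iteratedDeriv_succ, iteratedDeriv_zero, Finset.sum_range_succ, Finset.sum_range_zero,
    Nat.choose_zero_right, Nat.choose_succ_self_right, Nat.choose_self, Nat.reduceAdd,
    Nat.sub_self] at h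
  rw [h]
  push_cast
  ring

theorem starDefect_deriv_deriv (hf : ContDiffAt 𝕜 2 f x) (hg : ContDiffAt 𝕜 2 g x)
    (hh : ContDiffAt 𝕜 2 h x) : starDefect (fun f => deriv (deriv f)) f g h x = 0 := by
  have hd {u : 𝕜 → 𝕜} (hu : ContDiffAt 𝕜 2 u x) : DifferentiableAt 𝕜 u x :=
    hu.differentiableAt two_ne_zero
  have hfg : ContDiffAt 𝕜 2 (fun y => f y * g y) x := hf.mul hg
  simp only [starDefect, deriv_deriv_fun_mul hfg hh, deriv_deriv_fun_mul hf hg,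
    deriv_deriv_fun_mul hf hh, deriv_deriv_fun_mul hg hh, deriv_fun_mul (hd hf) (hd hg)]
  ring

end Derivatives

theorem statement12_general (k : ℕ) (hk : 2 ≤ k) (Ω : Set ℝ) (hΩ : IsOpen Ω)
    (c₀ c₁ c₂ d₀₀ : ℝ → ℝ)
    (hc₀ : ContinuousOn c₀ Ω) (hc₁ : ContinuousOn c₁ Ω)
    (hc₂ : ContinuousOn c₂ Ω) (hd₀₀ : ContinuousOn d₀₀ Ω)
    (D : (ℝ → ℝ) → (ℝ → ℝ))
    (hD : ∀ (f : ℝ → ℝ) (x : ℝ),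
      D f x = c₀ x * f x * Real.log |f x| + c₁ x * deriv f x + c₂ x * deriv (deriv f) x
        + d₀₀ x * f x * (Real.log |f x|) ^ 2) :
    (∀ f : ℝ → ℝ, ContDiffOn ℝ k f Ω → ContinuousOn (D f) Ω) ∧
    (∀ f g h : ℝ → ℝ,
      ContDiffOn ℝ k f Ω → ContDiffOn ℝ k g Ω → ContDiffOn ℝ k h Ω →
      ∀ x ∈ Ω,
        D (fun y => f y * g y * h y) x
          - f x * D (fun y => g y * h y) x
          - g x * D (fun y => f y * h y) x
          - h x * D (fun y => f y * g y) x
          + f x * g x * D h x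
          + f x * h x * D g x
          + g x * h x * D f x = 0) := by
  have hk' : (1 + 1 : WithTop ℕ∞) ≤ k := by exact_mod_cast hk
  constructor
  · intro f hf
    have hf' : ContDiffOn ℝ 1 (deriv f) Ω := hf.deriv_of_isOpen hΩ hk'
    have hlog : ContinuousOn (fun x => f x * log |f x|) Ω := by
      simpa only [log_abs] using continuous_mul_log.comp_continuousOn' hf.continuousOn
    have hlog_sq : ContinuousOn (fun x => f x * log |f x| ^ 2) Ω := by
      simpa only [log_abs] using continuous_mul_log_sq.comp_continuousOn' hf.continuousOn
    refine ContinuousOn.congr ?_ fun x _ => hD f x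
    have hdf : ContinuousOn (deriv f) Ω := hf'.continuousOn
    have hddf : ContinuousOn (deriv (deriv f)) Ω := hf'.continuousOn_deriv_of_isOpen hΩ le_rfl
    simp only [mul_assoc]
    fun_prop
  · intro f g h hf hg hh x hx
    have hC2 {u : ℝ → ℝ} (hu : ContDiffOn ℝ k u Ω) : ContDiffAt ℝ 2 u x :=
      (hu.contDiffAt (hΩ.mem_nhds hx)).of_le hk'
    have hD1 {u : ℝ → ℝ} (hu : ContDiffOn ℝ k u Ω) : DifferentiableAt ℝ u x :=
      (hC2 hu).differentiableAt two_ne_zero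
    have h₀ := starDefect_mul_log_abs f g h x
    have h₁ := starDefect_deriv (hD1 hf) (hD1 hg) (hD1 hh)
    have h₂ := starDefect_deriv_deriv (hC2 hf) (hC2 hg) (hC2 hh)
    have h₃ := starDefect_mul_log_abs_sq f g h x
    simp only [starDefect] at h₀ h₁ h₂ h₃
    simp only [hD]
    linear_combination c₀ x * h₀ + c₁ x * h₁ + c₂ x * h₂ + d₀₀ x * h₃

/-- (Converse of the main theorem.) Let `k ≥ 2`, let
`c₀, c₁, c₂, d₀₀ : Ω → ℝ` be continuous and define
`D(f)(x) = c₀(x)·f(x)·ln|f(x)| + c₁(x)·f'(x) + c₂(x)·f''(x) + d₀₀(x)·f(x)·(ln|f(x)|)²`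
(the conventions `0·ln 0 = 0`, `0·(ln 0)² = 0` hold automatically since `Real.log 0 = 0`).
Then `D` maps `C^k(Ω)` into `C(Ω)` and satisfies the identity (★). -/
theorem statement12 (k : ℕ) (hk : 2 ≤ k) (Ω : Set ℝ) (hΩ : IsOpen Ω) (hΩne : Ω.Nonempty)
    (c₀ c₁ c₂ d₀₀ : ℝ → ℝ)
    (hc₀ : ContinuousOn c₀ Ω) (hc₁ : ContinuousOn c₁ Ω)
    (hc₂ : ContinuousOn c₂ Ω) (hd₀₀ : ContinuousOn d₀₀ Ω)
    (D : (ℝ → ℝ) → (ℝ → ℝ))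
    (hD : ∀ (f : ℝ → ℝ) (x : ℝ),
      D f x = c₀ x * f x * Real.log |f x| + c₁ x * deriv f x + c₂ x * deriv (deriv f) x
        + d₀₀ x * f x * (Real.log |f x|) ^ 2) :
    (∀ f : ℝ → ℝ, ContDiffOn ℝ k f Ω → ContinuousOn (D f) Ω) ∧
    (∀ f g h : ℝ → ℝ,
      ContDiffOn ℝ k f Ω → ContDiffOn ℝ k g Ω → ContDiffOn ℝ k h Ω →
      ∀ x ∈ Ω,
        D (fun y => f y * g y * h y) x
          - f x * D (fun y => g y * h y) x
          - g x * D (fun y => f y * h y) x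
          - h x * D (fun y => f y * g y) x
          + f x * g x * D h x
          + f x * h x * D g x
          + g x * h x * D f x = 0) :=
  statement12_general k hk Ω hΩ c₀ c₁ c₂ d₀₀ hc₀ hc₁ hc₂ hd₀₀ D hD
end

section
/- Let k be a nonnegative integer, Ω ⊆ ℝ a nonempty open set, and c_i, d_{ij} : Ω → ℝ continuous functions for i, j = 0, …, k. Define, for strictly positive f ∈ C^k(Ω), D(f)(x) = f(x)·[ Σ_{i=0}^{k} c_i(x)·(ln∘f)^{(i)}(x) + Σ_{i=0}^{k} Σ_{j=0}^{k} d_{ij}(x)·(ln∘f)^{(i)}(x)·(ln∘f)^{(j)}(x) ]. Then D satisfies the identity D(f·g·h) − f·D(g·h) − g·D(f·h) − h·D(f·g) + f·g·D(h) + f·h·D(g) + g·h·D(f) = 0 for all strictly positive f, g, h ∈ C^k(Ω). -/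
/-!
Writing `L f` for the vector of the first `k + 1` derivatives of `ln ∘ f` at a point, the operator
is `D f = f · Q (L f)` for a polynomial `Q` of degree at most two without constant term, and
`L (f g) = L f + L g`. After division by `f g h`, the identity becomes the vanishing of the third
finite difference `Q(a+b+c) - Q(b+c) - Q(a+c) - Q(a+b) + Q(a) + Q(b) + Q(c)` of `Q`, which holds
for every such quadratic polynomial.
-/

section LinQuad

variable {ι R : Type*} [Fintype ι] [CommRing R]

def linQuad (c : ι → R) (d : ι → ι → R) (u : ι → R) : R :=
  ∑ i, c i * u i + ∑ i, ∑ j, d i j * u i * u j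

theorem linQuad_third_difference (c : ι → R) (d : ι → ι → R) (a b e : ι → R) :
    linQuad c d (a + b + e) - linQuad c d (b + e) - linQuad c d (a + e) - linQuad c d (a + b)
      + linQuad c d a + linQuad c d b + linQuad c d e = 0 := by
  simp only [linQuad, Pi.add_apply, mul_add, add_mul, Finset.sum_add_distrib]
  ring

end LinQuad

theorem iteratedDeriv_log_mul {F G : ℝ → ℝ} {x : ℝ} {n : ℕ}
    (hF : ContDiffAt ℝ n F x) (hG : ContDiffAt ℝ n G x) (hFx : F x ≠ 0) (hGx : G x ≠ 0) :
    iteratedDeriv n (fun y => Real.log (F y * G y)) x =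
      iteratedDeriv n (fun y => Real.log (F y)) x + iteratedDeriv n (fun y => Real.log (G y)) x := by
  have hlog : (fun y => Real.log (F y * G y)) =ᶠ[nhds x]
      fun y => Real.log (F y) + Real.log (G y) := by
    filter_upwards [hF.continuousAt.eventually_ne hFx, hG.continuousAt.eventually_ne hGx]
      with y hFy hGy
    exact Real.log_mul hFy hGy
  rw [hlog.iteratedDeriv_eq]
  exact iteratedDeriv_fun_add (hF.log hFx) (hG.log hGx)

noncomputable def logJet (n : ℕ) (f : ℝ → ℝ) (x : ℝ) : Fin (n + 1) → ℝ :=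
  fun i => iteratedDeriv i (fun y => Real.log (f y)) x

theorem logJet_mul {F G : ℝ → ℝ} {x : ℝ} {n : ℕ}
    (hF : ContDiffAt ℝ n F x) (hG : ContDiffAt ℝ n G x) (hFx : F x ≠ 0) (hGx : G x ≠ 0) :
    logJet n (fun y => F y * G y) x = logJet n F x + logJet n G x := by
  funext i
  have hi : ((i : ℕ) : WithTop ℕ∞) ≤ n := by exact_mod_cast i.is_le
  exact iteratedDeriv_log_mul (hF.of_le hi) (hG.of_le hi) hFx hGx

theorem statement14_general (k : ℕ) (Ω : Set ℝ) (hΩ : IsOpen Ω)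
    (c : Fin (k + 1) → ℝ → ℝ) (d : Fin (k + 1) → Fin (k + 1) → ℝ → ℝ)
    (D : (ℝ → ℝ) → (ℝ → ℝ))
    (hD : ∀ f : ℝ → ℝ, ContDiffOn ℝ k f Ω → (∀ x ∈ Ω, 0 < f x) → ∀ x ∈ Ω,
      D f x = f x *
        ((∑ i : Fin (k + 1), c i x * iteratedDeriv i (fun y => Real.log (f y)) x)
          + ∑ i : Fin (k + 1), ∑ j : Fin (k + 1),
              d i j x * iteratedDeriv i (fun y => Real.log (f y)) x
                * iteratedDeriv j (fun y => Real.log (f y)) x)) :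
    ∀ f g h : ℝ → ℝ,
      ContDiffOn ℝ k f Ω → ContDiffOn ℝ k g Ω → ContDiffOn ℝ k h Ω →
      (∀ x ∈ Ω, 0 < f x) → (∀ x ∈ Ω, 0 < g x) → (∀ x ∈ Ω, 0 < h x) →
      ∀ x ∈ Ω,
        D (fun y => f y * g y * h y) x
          - f x * D (fun y => g y * h y) x
          - g x * D (fun y => f y * h y) x
          - h x * D (fun y => f y * g y) x
          + f x * g x * D h x
          + f x * h x * D g x
          + g x * h x * D f x = 0 := by
  intro f g h hf hg hh hfp hgp hhp x hx
  set Q := linQuad (fun i => c i x) (fun i j => d i j x)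
  have hDQ : ∀ F, ContDiffOn ℝ k F Ω → (∀ y ∈ Ω, 0 < F y) → D F x = F x * Q (logJet k F x) :=
    fun F hF hFp => hD F hF hFp x hx
  have hpos : ∀ {F G : ℝ → ℝ}, (∀ y ∈ Ω, 0 < F y) → (∀ y ∈ Ω, 0 < G y) →
      ∀ y ∈ Ω, 0 < F y * G y := fun hFp hGp y hy => mul_pos (hFp y hy) (hGp y hy)
  have hjet : ∀ {F G : ℝ → ℝ}, ContDiffOn ℝ k F Ω → ContDiffOn ℝ k G Ω →
      (∀ y ∈ Ω, 0 < F y) → (∀ y ∈ Ω, 0 < G y) →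
      logJet k (fun y => F y * G y) x = logJet k F x + logJet k G x :=
    fun hF hG hFp hGp => logJet_mul (hF.contDiffAt (hΩ.mem_nhds hx))
      (hG.contDiffAt (hΩ.mem_nhds hx)) (hFp x hx).ne' (hGp x hx).ne'
  rw [hDQ _ ((hf.mul hg).mul hh) (hpos (hpos hfp hgp) hhp), hDQ _ (hg.mul hh) (hpos hgp hhp),
    hDQ _ (hf.mul hh) (hpos hfp hhp), hDQ _ (hf.mul hg) (hpos hfp hgp), hDQ h hh hhp,
    hDQ g hg hgp, hDQ f hf hfp, hjet (hf.mul hg) hh (hpos hfp hgp) hhp, hjet hf hg hfp hgp,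
    hjet hg hh hgp hhp, hjet hf hh hfp hhp]
  linear_combination (f x * g x * h x) *
    linQuad_third_difference _ _ (logJet k f x) (logJet k g x) (logJet k h x)

/-- (Converse for positive functions.) Given continuous `cᵢ, dᵢⱼ : Ω → ℝ`
(`i, j = 0, …, k`), the operator defined for strictly positive `f ∈ C^k(Ω)` by
`D(f)(x) = f(x)·[ Σᵢ cᵢ(x)·(ln∘f)^{(i)}(x) + Σᵢ Σⱼ dᵢⱼ(x)·(ln∘f)^{(i)}(x)·(ln∘f)^{(j)}(x) ]`
satisfies the identity (★) for all strictly positive `f, g, h ∈ C^k(Ω)`. -/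
theorem statement14 (k : ℕ) (Ω : Set ℝ) (hΩ : IsOpen Ω) (hΩne : Ω.Nonempty)
    (c : Fin (k + 1) → ℝ → ℝ) (d : Fin (k + 1) → Fin (k + 1) → ℝ → ℝ)
    (hc : ∀ i, ContinuousOn (c i) Ω) (hd : ∀ i j, ContinuousOn (d i j) Ω)
    (D : (ℝ → ℝ) → (ℝ → ℝ))
    (hD : ∀ f : ℝ → ℝ, ContDiffOn ℝ k f Ω → (∀ x ∈ Ω, 0 < f x) → ∀ x ∈ Ω,
      D f x = f x *
        ((∑ i : Fin (k + 1), c i x * iteratedDeriv i (fun y => Real.log (f y)) x)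
          + ∑ i : Fin (k + 1), ∑ j : Fin (k + 1),
              d i j x * iteratedDeriv i (fun y => Real.log (f y)) x
                * iteratedDeriv j (fun y => Real.log (f y)) x)) :
    ∀ f g h : ℝ → ℝ,
      ContDiffOn ℝ k f Ω → ContDiffOn ℝ k g Ω → ContDiffOn ℝ k h Ω →
      (∀ x ∈ Ω, 0 < f x) → (∀ x ∈ Ω, 0 < g x) → (∀ x ∈ Ω, 0 < h x) →
      ∀ x ∈ Ω,
        D (fun y => f y * g y * h y) x
          - f x * D (fun y => g y * h y) x
          - g x * D (fun y => f y * h y) x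
          - h x * D (fun y => f y * g y) x
          + f x * g x * D h x
          + f x * h x * D g x
          + g x * h x * D f x = 0 :=
  statement14_general k Ω hΩ c d D hD
end

section
/- Let k be a nonnegative integer, Ω ⊆ ℝ a nonempty open set, and D : C^k(Ω) → C(Ω) a linear operator (additive and ℝ-homogeneous) satisfying the identity (★): D(f·g·h) − f·D(g·h) − g·D(f·h) − h·D(f·g) + f·g·D(h) + f·h·D(g) + g·h·D(f) = 0 for all f, g, h ∈ C^k(Ω). If k ≥ 2, then there exist continuous functions c₁, c₂ : Ω → ℝ such that D(f)(x) = c₁(x)·f'(x) + c₂(x)·f''(x) for all f ∈ C^k(Ω) and x ∈ Ω. Moreover, if k = 0 then D = 0, and if k = 1 then D(f)(x) = c₁(x)·f'(x) for some continuous c₁ : Ω → ℝ. -/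
open Set Filter Topology Polynomial Finset

lemma derivChain {k : ℕ} {Ω : Set ℝ} (hΩ : IsOpen Ω) :
    ∀ f : ℝ → ℝ, ContDiffOn ℝ k f Ω →
      (∀ j ≤ k, ContinuousOn (deriv^[j] f) Ω) ∧
      (∀ j < k, ∀ x ∈ Ω, HasDerivAt (deriv^[j] f) (deriv^[j+1] f x) x) := by
  induction k with
  | zero =>
    intro f hf
    refine ⟨fun j hj => ?_, fun j hj => by omega⟩
    interval_cases j
    exact hf.continuousOn
  | succ k ih =>
    intro f hf
    rw [show ((k+1 : ℕ) : WithTop ℕ∞) = (k : WithTop ℕ∞) + 1 by push_cast; ring,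
        contDiffOn_succ_iff_deriv_of_isOpen hΩ] at hf
    obtain ⟨hdiff, -, hf'⟩ := hf
    obtain ⟨ihc, ihd⟩ := ih (deriv f) hf'
    constructor
    · intro j hj
      match j with
      | 0 => exact hdiff.continuousOn
      | j+1 =>
        rw [Function.iterate_succ_apply]
        exact ihc j (by omega)
    · intro j hj x hx
      match j with
      | 0 =>
        simpa using ((hdiff x hx).differentiableAt (hΩ.mem_nhds hx)).hasDerivAt
      | j+1 =>
        rw [Function.iterate_succ_apply, show deriv^[j+1+1] f = deriv^[j+1] (deriv f) from
          Function.iterate_succ_apply deriv (j+1) f ▸ rfl]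
        exact ihd j (by omega) x hx

lemma cutChain {Ω : Set ℝ} (hΩ : IsOpen Ω) {x₀ : ℝ}
    (S : Set ℝ) (hSo : IsOpen S) (hx₀S : x₀ ∉ S)
    (hco : ∀ x, x ≠ x₀ → x ∉ S → ∀ᶠ y in 𝓝 x, y ∉ S) :
    ∀ (k : ℕ) (F : ℕ → ℝ → ℝ),
    (∀ j ≤ k, ContinuousOn (F j) Ω) →
    (∀ j < k, ∀ x ∈ Ω, HasDerivAt (F j) (F (j+1) x) x) →
    (∀ j ≤ k, F j x₀ = 0) →
    ContDiffOn ℝ k (S.indicator (F 0)) Ω := by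
  have hind : ∀ (G : ℝ → ℝ) (y : ℝ), ‖S.indicator G y‖ ≤ ‖G y‖ := by
    intro G y
    by_cases hy : y ∈ S
    · simp [Set.indicator_of_mem hy]
    · simp [Set.indicator_of_notMem hy]
  have contG : ∀ (G : ℝ → ℝ), ContinuousOn G Ω → G x₀ = 0 →
      ∀ x ∈ Ω, ContinuousAt (S.indicator G) x := by
    intro G hG hG0 x hx
    have hGx : ContinuousAt G x := hG.continuousAt (hΩ.mem_nhds hx)
    by_cases hxS : x ∈ S
    · exact hGx.congr (by filter_upwards [hSo.mem_nhds hxS] with y hy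
        using (Set.indicator_of_mem hy G).symm)
    · by_cases hxx : x = x₀
      · subst hxx
        have : Tendsto (S.indicator G) (𝓝 x) (𝓝 0) := by
          apply squeeze_zero_norm (hind G)
          simpa [hG0] using hGx.norm.tendsto
        simpa [ContinuousAt, Set.indicator_of_notMem hxS] using this
      · exact continuousAt_const.congr (by filter_upwards [hco x hxx hxS] with y hy
          using (Set.indicator_of_notMem hy G).symm)
  have derG : ∀ (G G' : ℝ → ℝ), G x₀ = 0 → G' x₀ = 0 →
      (∀ x ∈ Ω, HasDerivAt G (G' x) x) →
      ∀ x ∈ Ω, HasDerivAt (S.indicator G) (S.indicator G' x) x := by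
    intro G G' hG0 hG'0 hder x hx
    by_cases hxS : x ∈ S
    · rw [Set.indicator_of_mem hxS]
      exact (hder x hx).congr_of_eventuallyEq
        (by filter_upwards [hSo.mem_nhds hxS] with y hy using Set.indicator_of_mem hy G)
    · by_cases hxx : x = x₀
      · subst hxx
        rw [Set.indicator_of_notMem hxS]
        rw [hasDerivAt_iff_tendsto_slope]
        have hFs : Tendsto (fun y => ‖slope G x y‖) (𝓝[≠] x) (𝓝 0) := by
          have := (hasDerivAt_iff_tendsto_slope.1 (hder x hx)).norm
          simpa [hG'0] using this
        apply squeeze_zero_norm _ hFs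
        intro y
        rw [slope_def_field, slope_def_field, Set.indicator_of_notMem hxS, hG0]
        simp only [sub_zero, norm_div]
        gcongr
        simpa using hind G y
      · rw [show S.indicator G' x = 0 from Set.indicator_of_notMem hxS G']
        exact (hasDerivAt_const x (0:ℝ)).congr_of_eventuallyEq
          (by filter_upwards [hco x hxx hxS] with y hy using Set.indicator_of_notMem hy G)
  intro k
  induction k with
  | zero =>
    intro F hcont hder h0
    rw [Nat.cast_zero, contDiffOn_zero]
    intro x hx
    exact (contG (F 0) (hcont 0 le_rfl) (h0 0 le_rfl) x hx).continuousWithinAt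
  | succ k ih =>
    intro F hcont hder h0
    rw [show ((k+1:ℕ) : WithTop ℕ∞) = (k : WithTop ℕ∞) + 1 by push_cast; ring,
      contDiffOn_succ_iff_deriv_of_isOpen hΩ]
    refine ⟨?_, ?_, ?_⟩
    · intro x hx
      exact (derG (F 0) (F 1) (h0 0 (by omega)) (h0 1 (by omega))
        (fun x hx => hder 0 (by omega) x hx) x hx).differentiableAt.differentiableWithinAt
    · intro h; exact absurd h (by simp)
    · have := ih (fun j => F (j+1)) (fun j hj => hcont (j+1) (by omega))
        (fun j hj x hx => hder (j+1) (by omega) x hx) (fun j hj => h0 (j+1) (by omega))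
      exact this.congr fun x hx => (derG (F 0) (F 1) (h0 0 (by omega)) (h0 1 (by omega))
        (fun x hx => hder 0 (by omega) x hx) x hx).deriv

lemma locality (k : ℕ) (Ω : Set ℝ) (D : (ℝ → ℝ) → (ℝ → ℝ))
    (hstar : ∀ f g h : ℝ → ℝ,
      ContDiffOn ℝ k f Ω → ContDiffOn ℝ k g Ω → ContDiffOn ℝ k h Ω →
      ∀ x ∈ Ω,
        D (fun y => f y * g y * h y) x
          - f x * D (fun y => g y * h y) x
          - g x * D (fun y => f y * h y) x
          - h x * D (fun y => f y * g y) x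
          + f x * g x * D h x
          + f x * h x * D g x
          + g x * h x * D f x = 0)
    (f : ℝ → ℝ) (hf : ContDiffOn ℝ k f Ω) (x : ℝ) (hx : x ∈ Ω)
    (ε : ℝ) (hε : 0 < ε) (h0 : ∀ y ∈ Metric.ball x ε, f y = 0) : D f x = 0 := by
  set b : ContDiffBump x := ⟨ε/2, ε, by positivity, by linarith⟩ with hb
  set φ : ℝ → ℝ := fun y => 1 - b y with hφ
  have hφ1 : ∀ y, y ∉ Metric.ball x ε → φ y = 1 := by
    intro y hy
    have : b y = 0 := b.zero_of_le_dist (by simpa [Metric.mem_ball] using hy)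
    simp [hφ, this]
  have hfφ : (fun y => f y * φ y) = f := by
    funext y
    by_cases hy : y ∈ Metric.ball x ε
    · simp [h0 y hy]
    · simp [hφ1 y hy]
  have hfφφ : (fun y => f y * φ y * φ y) = f := by
    funext y
    by_cases hy : y ∈ Metric.ball x ε
    · simp [h0 y hy]
    · simp [hφ1 y hy]
  have hφx : φ x = 0 := by
    have : b x = 1 := b.one_of_mem_closedBall (by simp [Metric.mem_closedBall]; positivity)
    simp [hφ, this]
  have hfx : f x = 0 := h0 x (Metric.mem_ball_self hε)
  have hφC : ContDiffOn ℝ k φ Ω :=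
    ((contDiff_const.sub b.contDiff).contDiffOn : ContDiffOn ℝ k φ Set.univ).mono
      (Set.subset_univ Ω)
  have := hstar f φ φ hf hφC hφC x hx
  rw [hfφφ, hfφ, hfx, hφx] at this
  linarith

lemma vanish_side (k : ℕ) (Ω : Set ℝ) (hΩ : IsOpen Ω) (D : (ℝ → ℝ) → (ℝ → ℝ))
    (hmap : ∀ f : ℝ → ℝ, ContDiffOn ℝ k f Ω → ContinuousOn (D f) Ω)
    (f : ℝ → ℝ) (hf : ContDiffOn ℝ k f Ω) (x₀ : ℝ) (hx₀ : x₀ ∈ Ω)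
    (l : Filter ℝ) [l.NeBot] (hl : l ≤ 𝓝 x₀)
    (hev : ∀ᶠ x in l, D f x = 0) : D f x₀ = 0 := by
  have hc : ContinuousAt (D f) x₀ := (hmap f hf).continuousAt (hΩ.mem_nhds hx₀)
  have T1 : Tendsto (D f) l (𝓝 (D f x₀)) := hc.tendsto.mono_left hl
  have T2 : Tendsto (D f) l (𝓝 0) := by
    rw [tendsto_congr' (by filter_upwards [hev] with x hx using hx)]
    exact tendsto_const_nhds
  exact tendsto_nhds_unique T1 T2

lemma flat_zero (k : ℕ) (Ω : Set ℝ) (hΩ : IsOpen Ω) (D : (ℝ → ℝ) → (ℝ → ℝ))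
    (hmap : ∀ f : ℝ → ℝ, ContDiffOn ℝ k f Ω → ContinuousOn (D f) Ω)
    (hadd : ∀ f g : ℝ → ℝ, ContDiffOn ℝ k f Ω → ContDiffOn ℝ k g Ω →
      ∀ x ∈ Ω, D (fun y => f y + g y) x = D f x + D g x)
    (hstar : ∀ f g h : ℝ → ℝ,
      ContDiffOn ℝ k f Ω → ContDiffOn ℝ k g Ω → ContDiffOn ℝ k h Ω →
      ∀ x ∈ Ω,
        D (fun y => f y * g y * h y) x
          - f x * D (fun y => g y * h y) x
          - g x * D (fun y => f y * h y) x
          - h x * D (fun y => f y * g y) x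
          + f x * g x * D h x
          + f x * h x * D g x
          + g x * h x * D f x = 0)
    (f : ℝ → ℝ) (hf : ContDiffOn ℝ k f Ω) (x₀ : ℝ) (hx₀ : x₀ ∈ Ω)
    (h0 : ∀ j ≤ k, deriv^[j] f x₀ = 0) : D f x₀ = 0 := by
  obtain ⟨hcont, hder⟩ := derivChain hΩ f hf
  set G : ℝ → ℝ := (Set.Ioi x₀).indicator f with hGdef
  set H : ℝ → ℝ := (Set.Iio x₀).indicator f with hHdef
  have hG : ContDiffOn ℝ k G Ω := by
    apply cutChain hΩ (Set.Ioi x₀) isOpen_Ioi (by simp)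
      (fun x hxx hxS => ?_) k (fun j => deriv^[j] f)
      (fun j hj => hcont j hj) (fun j hj x hx => hder j hj x hx) h0
    have hxlt : x < x₀ := lt_of_le_of_ne (by simpa using hxS) hxx
    filter_upwards [Iio_mem_nhds hxlt] with y hy
    simpa using le_of_lt hy
  have hH : ContDiffOn ℝ k H Ω := by
    apply cutChain hΩ (Set.Iio x₀) isOpen_Iio (by simp)
      (fun x hxx hxS => ?_) k (fun j => deriv^[j] f)
      (fun j hj => hcont j hj) (fun j hj x hx => hder j hj x hx) h0
    have hxgt : x₀ < x := lt_of_le_of_ne (by simpa using hxS) (Ne.symm hxx)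
    filter_upwards [Ioi_mem_nhds hxgt] with y hy
    simpa using le_of_lt hy
  have hGH : (fun y => G y + H y) = f := by
    funext y
    rcases lt_trichotomy y x₀ with h | h | h
    · simp [hGdef, hHdef, Set.indicator_apply, h, not_lt.2 (le_of_lt h), Set.mem_Ioi, Set.mem_Iio]
    · subst h
      have h00 : f y = 0 := by simpa using h0 0 (Nat.zero_le k)
      simp [hGdef, hHdef, Set.indicator_apply, Set.mem_Ioi, Set.mem_Iio, h00]
    · simp [hGdef, hHdef, Set.indicator_apply, h, not_lt.2 (le_of_lt h), Set.mem_Ioi, Set.mem_Iio]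
  have hsplit : D f x₀ = D G x₀ + D H x₀ := by
    rw [← hadd G H hG hH x₀ hx₀, hGH]
  have hDG : D G x₀ = 0 := by
    apply vanish_side k Ω hΩ D hmap G hG x₀ hx₀ (𝓝[<] x₀) nhdsWithin_le_nhds
    filter_upwards [self_mem_nhdsWithin,
      (nhdsWithin_le_nhds : 𝓝[<] x₀ ≤ 𝓝 x₀) (hΩ.mem_nhds hx₀)] with x hxlt hxΩ
    apply locality k Ω D hstar G hG x hxΩ (x₀ - x) (by simpa using hxlt)
    intro y hy
    have : y < x₀ := by
      have := abs_lt.1 (by simpa [Real.dist_eq] using hy)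
      linarith [this.2]
    simp [hGdef, Set.indicator_apply, not_lt.2 (le_of_lt this), Set.mem_Ioi]
  have hDH : D H x₀ = 0 := by
    apply vanish_side k Ω hΩ D hmap H hH x₀ hx₀ (𝓝[>] x₀) nhdsWithin_le_nhds
    filter_upwards [self_mem_nhdsWithin,
      (nhdsWithin_le_nhds : 𝓝[>] x₀ ≤ 𝓝 x₀) (hΩ.mem_nhds hx₀)] with x hxgt hxΩ
    apply locality k Ω D hstar H hH x hxΩ (x - x₀) (by simpa using hxgt)
    intro y hy
    have : x₀ < y := by
      have := abs_lt.1 (by simpa [Real.dist_eq] using hy)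
      linarith [this.1]
    simp [hHdef, Set.indicator_apply, not_lt.2 (le_of_lt this), Set.mem_Iio]
  rw [hsplit, hDG, hDH, add_zero]

lemma D_one (k : ℕ) (Ω : Set ℝ) (D : (ℝ → ℝ) → (ℝ → ℝ))
    (hstar : ∀ f g h : ℝ → ℝ,
      ContDiffOn ℝ k f Ω → ContDiffOn ℝ k g Ω → ContDiffOn ℝ k h Ω →
      ∀ x ∈ Ω,
        D (fun y => f y * g y * h y) x
          - f x * D (fun y => g y * h y) x
          - g x * D (fun y => f y * h y) x
          - h x * D (fun y => f y * g y) x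
          + f x * g x * D h x
          + f x * h x * D g x
          + g x * h x * D f x = 0)
    (x : ℝ) (hx : x ∈ Ω) : D (fun _ => (1:ℝ)) x = 0 := by
  have hc : ContDiffOn ℝ k (fun _ : ℝ => (1:ℝ)) Ω := contDiffOn_const
  have := hstar (fun _ => 1) (fun _ => 1) (fun _ => 1) hc hc hc x hx
  simp only [one_mul, mul_one] at this
  linarith

lemma D_lin2 (k : ℕ) (Ω : Set ℝ) (D : (ℝ → ℝ) → (ℝ → ℝ))
    (hadd : ∀ f g : ℝ → ℝ, ContDiffOn ℝ k f Ω → ContDiffOn ℝ k g Ω →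
      ∀ x ∈ Ω, D (fun y => f y + g y) x = D f x + D g x)
    (hsmul : ∀ (a : ℝ) (f : ℝ → ℝ), ContDiffOn ℝ k f Ω →
      ∀ x ∈ Ω, D (fun y => a * f y) x = a * D f x)
    (α β : ℝ) (f g : ℝ → ℝ) (hf : ContDiffOn ℝ k f Ω) (hg : ContDiffOn ℝ k g Ω)
    (x : ℝ) (hx : x ∈ Ω) :
    D (fun y => α * f y + β * g y) x = α * D f x + β * D g x := by
  rw [hadd (fun y => α * f y) (fun y => β * g y) (contDiffOn_const.mul hf)
    (contDiffOn_const.mul hg) x hx, hsmul α f hf x hx, hsmul β g hg x hx]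

lemma D_mono (k : ℕ) (Ω : Set ℝ) (D : (ℝ → ℝ) → (ℝ → ℝ))
    (hadd : ∀ f g : ℝ → ℝ, ContDiffOn ℝ k f Ω → ContDiffOn ℝ k g Ω →
      ∀ x ∈ Ω, D (fun y => f y + g y) x = D f x + D g x)
    (hsmul : ∀ (a : ℝ) (f : ℝ → ℝ), ContDiffOn ℝ k f Ω →
      ∀ x ∈ Ω, D (fun y => a * f y) x = a * D f x)
    (hstar : ∀ f g h : ℝ → ℝ,
      ContDiffOn ℝ k f Ω → ContDiffOn ℝ k g Ω → ContDiffOn ℝ k h Ω →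
      ∀ x ∈ Ω,
        D (fun y => f y * g y * h y) x
          - f x * D (fun y => g y * h y) x
          - g x * D (fun y => f y * h y) x
          - h x * D (fun y => f y * g y) x
          + f x * g x * D h x
          + f x * h x * D g x
          + g x * h x * D f x = 0)
    (a : ℝ) :
    ∀ n : ℕ, ∀ x ∈ Ω, D (fun y => (y - a)^n) x
      = D (fun y => y) x * ((n:ℝ) * (x - a)^(n-1))
        + ((D (fun y => y*y) x - 2*x*(D (fun y => y) x))/2)
          * (((n:ℝ)*((n:ℝ)-1)) * (x - a)^(n-2)) := by
  have hu : ContDiffOn ℝ k (fun y : ℝ => y) Ω := contDiff_id.contDiffOn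
  have huu : ContDiffOn ℝ k (fun y : ℝ => y*y) Ω := (contDiff_id.mul contDiff_id).contDiffOn
  have h1 : ContDiffOn ℝ k (fun y : ℝ => y - a) Ω := (contDiff_id.sub contDiff_const).contDiffOn
  have hpow : ∀ m : ℕ, ContDiffOn ℝ k (fun y : ℝ => (y - a)^m) Ω :=
    fun m => ((contDiff_id.sub contDiff_const).pow m).contDiffOn
  set c1 : ℝ → ℝ := fun x => D (fun y => y) x with hc1
  set c2 : ℝ → ℝ := fun x => (D (fun y => y*y) x - 2*x*(D (fun y => y) x))/2 with hc2
  have base1 : ∀ x ∈ Ω, D (fun y => y - a) x = c1 x := by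
    intro x hx
    rw [show (fun y : ℝ => y - a) = fun y => 1 * y + (-a) * 1 from funext fun y => by ring]
    rw [D_lin2 k Ω D hadd hsmul 1 (-a) (fun y => y) (fun _ => 1) hu contDiffOn_const x hx,
      D_one k Ω D hstar x hx]
    simp [hc1]
  have base2 : ∀ x ∈ Ω, D (fun y => (y - a)^2) x = c1 x * (2*(x-a)) + c2 x * 2 := by
    intro x hx
    have hinner : ContDiffOn ℝ k (fun y : ℝ => -(2*a) * y + (a*a) * 1) Ω :=
      ((contDiff_const.mul contDiff_id).add contDiff_const).contDiffOn
    rw [show (fun y : ℝ => (y - a)^2) = fun y => 1 * (y*y) + 1 * (-(2*a) * y + (a*a) * 1)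
      from funext fun y => by ring]
    rw [D_lin2 k Ω D hadd hsmul 1 1 (fun y => y*y) (fun y => -(2*a) * y + (a*a) * 1) huu hinner x hx,
      D_lin2 k Ω D hadd hsmul (-(2*a)) (a*a) (fun y => y) (fun _ => 1) hu contDiffOn_const x hx,
      D_one k Ω D hstar x hx]
    simp only [hc1, hc2]
    ring
  have base3 : ∀ x ∈ Ω, D (fun y => (y - a)^3) x = c1 x * (3*(x-a)^2) + c2 x * (6*(x-a)) := by
    intro x hx
    have hs := hstar (fun y => y - a) (fun y => y - a) (fun y => y - a) h1 h1 h1 x hx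
    rw [show (fun y : ℝ => (y - a) * (y - a) * (y - a)) = fun y => (y - a)^3
        from funext fun y => by ring,
      show (fun y : ℝ => (y - a) * (y - a)) = fun y => (y - a)^2
        from funext fun y => by ring] at hs
    rw [base2 x hx, base1 x hx] at hs
    linear_combination hs
  have key : ∀ m : ℕ,
      (∀ x ∈ Ω, D (fun y => (y - a)^(m+2)) x
        = c1 x * (((m:ℝ)+2)*(x-a)^(m+1)) + c2 x * ((((m:ℝ)+2)*((m:ℝ)+1))*(x-a)^m)) ∧
      (∀ x ∈ Ω, D (fun y => (y - a)^(m+1+2)) x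
        = c1 x * (((m:ℝ)+1+2)*(x-a)^(m+1+1)) + c2 x * ((((m:ℝ)+1+2)*((m:ℝ)+1+1))*(x-a)^(m+1))) := by
    intro m
    induction m with
    | zero =>
      constructor
      · intro x hx
        rw [base2 x hx]
        norm_num
      · intro x hx
        rw [show (0:ℕ)+1+2 = 3 from rfl, base3 x hx]
        norm_num
    | succ m ih =>
      refine ⟨?_, ?_⟩
      · intro x hx
        rw [ih.2 x hx]
        push_cast
        ring
      intro x hx
      have hs := hstar (fun y => (y - a)^(m+2)) (fun y => y - a) (fun y => y - a)
        (hpow (m+2)) h1 h1 x hx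
      rw [show (fun y : ℝ => (y - a)^(m+2) * (y - a) * (y - a)) = fun y => (y - a)^(m+1+1+2)
          from funext fun y => by ring,
        show (fun y : ℝ => (y - a) * (y - a)) = fun y => (y - a)^2
          from funext fun y => by ring,
        show (fun y : ℝ => (y - a)^(m+2) * (y - a)) = fun y => (y - a)^(m+1+2)
          from funext fun y => by ring] at hs
      rw [base2 x hx, base1 x hx, ih.1 x hx, ih.2 x hx] at hs
      push_cast at hs ⊢
      linear_combination hs
  intro n
  match n with
  | 0 =>
    intro x hx
    rw [show (fun y : ℝ => (y - a)^0) = fun _ => (1:ℝ) from funext fun y => by ring,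
      D_one k Ω D hstar x hx]
    norm_num
  | 1 =>
    intro x hx
    rw [show (fun y : ℝ => (y - a)^1) = fun y => y - a from funext fun y => by ring,
      base1 x hx]
    norm_num
    rfl
  | (m+2) =>
    intro x hx
    rw [(key m).1 x hx]
    have e1 : (m+2) - 1 = m+1 := by omega
    have e2 : (m+2) - 2 = m := by omega
    rw [e1, e2]
    push_cast
    ring

lemma contDiff_evalPoly (n : WithTop ℕ∞) (P : Polynomial ℝ) : ContDiff ℝ n fun y => P.eval y := by
  induction P using Polynomial.induction_on' with
  | add p q hp hq => simpa only [Polynomial.eval_add] using hp.add hq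
  | monomial m c =>
    simp only [Polynomial.eval_monomial]; fun_prop

lemma iterDeriv_evalPoly (j : ℕ) (P : Polynomial ℝ) :
    deriv^[j] (fun y => P.eval y) = fun y => (Polynomial.derivative^[j] P).eval y := by
  induction j generalizing P with
  | zero => rfl
  | succ j ih =>
    rw [Function.iterate_succ_apply,
      show deriv (fun y => P.eval y) = fun y => (Polynomial.derivative P).eval y
        from funext fun y => P.deriv, ih, Function.iterate_succ_apply]

lemma D_sum (k : ℕ) (Ω : Set ℝ) (D : (ℝ → ℝ) → (ℝ → ℝ))
    (hadd : ∀ f g : ℝ → ℝ, ContDiffOn ℝ k f Ω → ContDiffOn ℝ k g Ω →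
      ∀ x ∈ Ω, D (fun y => f y + g y) x = D f x + D g x)
    (hsmul : ∀ (a : ℝ) (f : ℝ → ℝ), ContDiffOn ℝ k f Ω →
      ∀ x ∈ Ω, D (fun y => a * f y) x = a * D f x)
    (c : ℕ → ℝ) (e : ℕ → ℝ → ℝ)
    (he : ∀ j, ContDiffOn ℝ k (e j) Ω) (x : ℝ) (hx : x ∈ Ω) :
    ∀ N : ℕ, D (fun y => ∑ j ∈ Finset.range N, c j * e j y) x
      = ∑ j ∈ Finset.range N, c j * D (e j) x := by
  intro N
  induction N with
  | zero =>
    simp only [Finset.range_zero, Finset.sum_empty]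
    have := hsmul 0 (fun _ => (0:ℝ)) contDiffOn_const x hx
    simpa using this
  | succ N ih =>
    have hsum : ContDiffOn ℝ k (fun y => ∑ j ∈ Finset.range N, c j * e j y) Ω :=
      ContDiffOn.sum fun j _ => contDiffOn_const.mul (he j)
    rw [show (fun y => ∑ j ∈ Finset.range (N+1), c j * e j y)
        = fun y => (∑ j ∈ Finset.range N, c j * e j y) + c N * e N y
        from funext fun y => Finset.sum_range_succ _ N,
      hadd _ _ hsum (contDiffOn_const.mul (he N)) x hx,
      hsmul (c N) (e N) (he N) x hx, ih, Finset.sum_range_succ]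

lemma master (k : ℕ) (Ω : Set ℝ) (hΩ : IsOpen Ω) (D : (ℝ → ℝ) → (ℝ → ℝ))
    (hmap : ∀ f : ℝ → ℝ, ContDiffOn ℝ k f Ω → ContinuousOn (D f) Ω)
    (hadd : ∀ f g : ℝ → ℝ, ContDiffOn ℝ k f Ω → ContDiffOn ℝ k g Ω →
      ∀ x ∈ Ω, D (fun y => f y + g y) x = D f x + D g x)
    (hsmul : ∀ (a : ℝ) (f : ℝ → ℝ), ContDiffOn ℝ k f Ω →
      ∀ x ∈ Ω, D (fun y => a * f y) x = a * D f x)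
    (hstar : ∀ f g h : ℝ → ℝ,
      ContDiffOn ℝ k f Ω → ContDiffOn ℝ k g Ω → ContDiffOn ℝ k h Ω →
      ∀ x ∈ Ω,
        D (fun y => f y * g y * h y) x
          - f x * D (fun y => g y * h y) x
          - g x * D (fun y => f y * h y) x
          - h x * D (fun y => f y * g y) x
          + f x * g x * D h x
          + f x * h x * D g x
          + g x * h x * D f x = 0)
    (f : ℝ → ℝ) (hf : ContDiffOn ℝ k f Ω) (x₀ : ℝ) (hx₀ : x₀ ∈ Ω) :
    D f x₀ = ∑ j ∈ Finset.range (k+1),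
      (deriv^[j] f x₀ / j.factorial) * (D (fun y => (y - x₀)^j) x₀) := by
  classical
  set d : ℕ → ℝ := fun j => deriv^[j] f x₀ / j.factorial with hd
  set P : Polynomial ℝ :=
    ∑ j ∈ Finset.range (k+1), Polynomial.C (d j) * (Polynomial.X - Polynomial.C x₀)^j with hP
  set p : ℝ → ℝ := fun y => P.eval y with hpdef
  have hp_eq : p = fun y => ∑ j ∈ Finset.range (k+1), d j * (y - x₀)^j := by
    funext y
    simp [hpdef, hP, Polynomial.eval_finset_sum]
  have hpC : ContDiffOn ℝ k p Ω := (contDiff_evalPoly _ P).contDiffOn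
  have hpow : ∀ m : ℕ, ContDiffOn ℝ k (fun y : ℝ => (y - x₀)^m) Ω :=
    fun m => ((contDiff_id.sub contDiff_const).pow m).contDiffOn
  have hPj : ∀ j, j ≤ k → (Polynomial.derivative^[j] P).eval x₀ = j.factorial * d j := by
    intro j hj
    rw [hP, Polynomial.iterate_derivative_sum, Polynomial.eval_finset_sum]
    rw [Finset.sum_eq_single j]
    · rw [Polynomial.iterate_derivative_C_mul, Polynomial.iterate_derivative_X_sub_pow]
      simp [Nat.descFactorial_self, mul_comm]
    · intro i hi hij
      rw [Polynomial.iterate_derivative_C_mul, Polynomial.iterate_derivative_X_sub_pow]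
      rcases lt_or_gt_of_ne hij with hlt | hgt
      · simp [Nat.descFactorial_eq_zero_iff_lt.2 (by omega : i < j)]
      · simp [zero_pow (by omega : i - j ≠ 0)]
    · intro h
      exact absurd (Finset.mem_range.2 (by omega)) h
  obtain ⟨hcontf, hderf⟩ := derivChain hΩ f hf
  have hsub : ∀ j, j ≤ k → ∀ x ∈ Ω,
      deriv^[j] (fun y => f y - p y) x = deriv^[j] f x - deriv^[j] p x := by
    intro j
    induction j with
    | zero => intro _ x hx; rfl
    | succ j ih =>
      intro hj x hx
      have hev : deriv^[j] (fun y => f y - p y)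
          =ᶠ[nhds x] fun y => deriv^[j] f y - deriv^[j] p y := by
        filter_upwards [hΩ.mem_nhds hx] with y hy using ih (by omega) y hy
      have hdiff_f : DifferentiableAt ℝ (deriv^[j] f) x :=
        (hderf j (by omega) x hx).differentiableAt
      have hdiff_p : DifferentiableAt ℝ (deriv^[j] p) x := by
        rw [hpdef, iterDeriv_evalPoly]
        exact (Polynomial.differentiable _).differentiableAt
      rw [Function.iterate_succ_apply', hev.deriv_eq, deriv_fun_sub hdiff_f hdiff_p,
        Function.iterate_succ_apply' deriv j f, Function.iterate_succ_apply' deriv j p]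
  have hflat : ∀ j, j ≤ k → deriv^[j] (fun y => f y - p y) x₀ = 0 := by
    intro j hj
    have hpj : deriv^[j] p x₀ = (Polynomial.derivative^[j] P).eval x₀ := by
      rw [hpdef, iterDeriv_evalPoly]
    rw [hsub j hj x₀ hx₀, hpj, hPj j hj]
    simp only [hd]
    have : (j.factorial : ℝ) ≠ 0 := Nat.cast_ne_zero.2 j.factorial_ne_zero
    field_simp
    ring
  have hfp : ContDiffOn ℝ k (fun y => f y - p y) Ω := hf.sub hpC
  have hDr : D (fun y => f y - p y) x₀ = 0 :=
    flat_zero k Ω hΩ D hmap hadd hstar _ hfp x₀ hx₀ hflat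
  have hsplit : D f x₀ = D (fun y => f y - p y) x₀ + D p x₀ := by
    rw [← hadd _ p hfp hpC x₀ hx₀,
      show (fun y => (f y - p y) + p y) = f from funext fun y => by ring]
  rw [hsplit, hDr, zero_add, show D p x₀ = D (fun y => ∑ j ∈ Finset.range (k+1),
      d j * (y - x₀)^j) x₀ from by rw [← hp_eq],
    D_sum k Ω D hadd hsmul d (fun j => fun y => (y - x₀)^j) hpow x₀ hx₀]

/-- (Linear solutions of (★).) If a linear (additive and ℝ-homogeneous)
operator `D : C^k(Ω) → C(Ω)` satisfies the identity (★), then there are continuous functions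
`c₁, c₂ : Ω → ℝ` with `D(f)(x) = c₁(x)·f'(x) + c₂(x)·f''(x)` for all `f ∈ C^k(Ω)`, `x ∈ Ω`;
moreover for `k = 0` one has `c₁ = c₂ = 0` (i.e. `D = 0` on `Ω`), and for `k = 1` one has
`c₂ = 0` (i.e. `D(f)(x) = c₁(x)·f'(x)`).  (The statement is formulated for every nonnegative
integer `k`, the clauses for `k = 0` and `k = 1` being recorded as implications.) -/
theorem statement15 (k : ℕ) (Ω : Set ℝ) (hΩ : IsOpen Ω) (hΩne : Ω.Nonempty)
    (D : (ℝ → ℝ) → (ℝ → ℝ))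
    (hmap : ∀ f : ℝ → ℝ, ContDiffOn ℝ k f Ω → ContinuousOn (D f) Ω)
    (hadd : ∀ f g : ℝ → ℝ, ContDiffOn ℝ k f Ω → ContDiffOn ℝ k g Ω →
      ∀ x ∈ Ω, D (fun y => f y + g y) x = D f x + D g x)
    (hsmul : ∀ (a : ℝ) (f : ℝ → ℝ), ContDiffOn ℝ k f Ω →
      ∀ x ∈ Ω, D (fun y => a * f y) x = a * D f x)
    (hstar : ∀ f g h : ℝ → ℝ,
      ContDiffOn ℝ k f Ω → ContDiffOn ℝ k g Ω → ContDiffOn ℝ k h Ω →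
      ∀ x ∈ Ω,
        D (fun y => f y * g y * h y) x
          - f x * D (fun y => g y * h y) x
          - g x * D (fun y => f y * h y) x
          - h x * D (fun y => f y * g y) x
          + f x * g x * D h x
          + f x * h x * D g x
          + g x * h x * D f x = 0) :
    ∃ c₁ c₂ : ℝ → ℝ,
      ContinuousOn c₁ Ω ∧ ContinuousOn c₂ Ω ∧
      (∀ f : ℝ → ℝ, ContDiffOn ℝ k f Ω → ∀ x ∈ Ω,
        D f x = c₁ x * deriv f x + c₂ x * deriv (deriv f) x) ∧
      (k = 0 → c₁ = 0 ∧ c₂ = 0) ∧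
      (k = 1 → c₂ = 0) := by
  have hu : ContDiffOn ℝ k (fun y : ℝ => y) Ω := contDiff_id.contDiffOn
  have huu : ContDiffOn ℝ k (fun y : ℝ => y*y) Ω := (contDiff_id.mul contDiff_id).contDiffOn
  rcases k with _ | _ | m
  · -- k = 0
    refine ⟨0, 0, continuousOn_const, continuousOn_const, ?_, fun _ => ⟨rfl, rfl⟩,
      fun h => by omega⟩
    intro f hf x hx
    rw [master 0 Ω hΩ D hmap hadd hsmul hstar f hf x hx]
    rw [show (0+1) = 1 from rfl, Finset.sum_range_one]
    rw [show (fun y : ℝ => (y - x)^0) = fun _ => (1:ℝ) from funext fun y => by ring,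
      D_one 0 Ω D hstar x hx]
    simp
  · -- k = 1
    refine ⟨fun x => D (fun y => y) x, 0, hmap _ hu, continuousOn_const, ?_,
      fun h => by omega, fun _ => rfl⟩
    intro f hf x hx
    rw [master 1 Ω hΩ D hmap hadd hsmul hstar f hf x hx]
    rw [Finset.sum_range_succ, Finset.sum_range_one]
    rw [show (fun y : ℝ => (y - x)^0) = fun _ => (1:ℝ) from funext fun y => by ring,
      D_one 1 Ω D hstar x hx,
      show (fun y : ℝ => (y - x)^1) = fun y => y - x from funext fun y => by ring]
    have hb1 := D_mono 1 Ω D hadd hsmul hstar x 1 x hx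
    rw [show (fun y : ℝ => (y - x)^1) = fun y => y - x from funext fun y => by ring] at hb1
    rw [hb1]
    simp [Nat.factorial, Pi.zero_apply]
    ring
  · -- k = m + 2
    refine ⟨fun x => D (fun y => y) x,
      fun x => (D (fun y => y*y) x - 2*x*(D (fun y => y) x))/2,
      hmap _ hu, ?_, ?_, fun h => by omega, fun h => by omega⟩
    · exact ((hmap _ huu).sub ((continuousOn_const.mul continuousOn_id).mul
        (hmap _ hu))).div_const 2
    intro f hf x hx
    rw [master (m+2) Ω hΩ D hmap hadd hsmul hstar f hf x hx]
    rw [Finset.sum_range_succ', Finset.sum_range_succ', Finset.sum_range_succ']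
    have hz : ∑ i ∈ Finset.range m,
        (deriv^[i+1+1+1] f x / (i+1+1+1).factorial) * (D (fun y => (y - x)^(i+1+1+1)) x) = 0 := by
      apply Finset.sum_eq_zero
      intro i _
      rw [D_mono (m+2) Ω D hadd hsmul hstar x (i+1+1+1) x hx]
      simp [sub_self, zero_pow]
    rw [hz]
    rw [D_mono (m+2) Ω D hadd hsmul hstar x (0+1+1) x hx,
      show (fun y : ℝ => (y - x)^(0+1)) = fun y => y - x from funext fun y => by ring,
      show (fun y : ℝ => (y - x)^0) = fun _ => (1:ℝ) from funext fun y => by ring,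
      D_one (m+2) Ω D hstar x hx]
    have hb1 := D_mono (m+2) Ω D hadd hsmul hstar x 1 x hx
    rw [show (fun y : ℝ => (y - x)^1) = fun y => y - x from funext fun y => by ring] at hb1
    rw [hb1]
    have h2 : deriv^[0+1+1] f x = deriv (deriv f) x := by
      rw [Function.iterate_succ_apply', Function.iterate_one]
    have h1 : deriv^[0+1] f x = deriv f x := by rw [Function.iterate_one]
    rw [h2, h1]
    simp [sub_self, Nat.factorial]
    ring
end

section
/- Let k be a nonnegative integer with k ≥ 2, Ω ⊆ ℝ a nonempty open set, and D : C^k(Ω) → C(Ω) a linear operator (additive and ℝ-homogeneous) satisfying D(f³) − 3·f·D(f²) + 3·f²·D(f) = 0 for all f ∈ C^k(Ω), where f² and f³ denote pointwise powers. Then there exist continuous functions c₁, c₂ : Ω → ℝ such that D(f)(x) = c₁(x)·f'(x) + c₂(x)·f''(x) for all f ∈ C^k(Ω) and x ∈ Ω. Moreover, if k = 0 then D = 0, and if k = 1 then D(f)(x) = c₁(x)·f'(x) for some continuous c₁. -/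
open Set Filter Topology

/-! Polarizing the cubic identity gives `D (f² h) x = 0` whenever `f x = h x = 0`. Writing
`f = w² (w f)` with `w = 1 - (bump at x)` shows that `D` is local, and then, by continuity of
`D f`, that `D f x = 0` whenever `f` is `k`-flat at `x`: cut `f` at `x` into two `C^k` pieces,
each vanishing on one side of `x`. Subtracting the Taylor polynomial of order `k` reduces `D f x`
to the values of `D` on the monomials `(y - x)^i`, which vanish for `i = 0` and for `i ≥ 3`. -/

section IndicatorIci

variable {r : ℝ → ℝ} {x₀ y : ℝ}

theorem indicator_Ici_eventuallyEq_zero (h : y < x₀) : (Ici x₀).indicator r =ᶠ[𝓝 y] 0 := by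
  filter_upwards [Iio_mem_nhds h] with z hz
  exact indicator_of_notMem (not_le.2 hz) r

theorem indicator_Ici_eventuallyEq_self (h : x₀ < y) : (Ici x₀).indicator r =ᶠ[𝓝 y] r := by
  filter_upwards [Ioi_mem_nhds h] with z hz
  exact indicator_of_mem (le_of_lt hz) r

theorem indicator_Ici_isBigO : (Ici x₀).indicator r =O[𝓝 y] r :=
  Asymptotics.isBigO_of_le _ fun z => norm_indicator_le_norm_self r z

theorem continuousAt_indicator_Ici (hr : ContinuousAt r y) (h0 : r x₀ = 0) :
    ContinuousAt ((Ici x₀).indicator r) y := by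
  rcases lt_trichotomy y x₀ with h | rfl | h
  · exact continuousAt_const.congr (indicator_Ici_eventuallyEq_zero h).symm
  · have hr0 : Tendsto r (𝓝 y) (𝓝 0) := h0 ▸ hr.tendsto
    rw [ContinuousAt, indicator_of_mem self_mem_Ici, h0]
    exact indicator_Ici_isBigO.trans_tendsto hr0
  · exact hr.congr (indicator_Ici_eventuallyEq_self h).symm

theorem hasDerivAt_indicator_Ici (hr : DifferentiableAt ℝ r y) (h0 : r x₀ = 0)
    (h1 : deriv r x₀ = 0) :
    HasDerivAt ((Ici x₀).indicator r) ((Ici x₀).indicator (deriv r) y) y := by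
  rcases lt_trichotomy y x₀ with h | rfl | h
  · rw [indicator_of_notMem (notMem_Ici.2 h)]
    exact (hasDerivAt_const y 0).congr_of_eventuallyEq (indicator_Ici_eventuallyEq_zero h)
  · have hr' := hasDerivAt_iff_isLittleO.1 (h1 ▸ hr.hasDerivAt)
    rw [indicator_of_mem self_mem_Ici, h1, hasDerivAt_iff_isLittleO]
    simp only [indicator_of_mem self_mem_Ici, h0, smul_zero, sub_zero] at hr' ⊢
    exact indicator_Ici_isBigO.trans_isLittleO hr'
  · rw [indicator_of_mem (mem_Ici.2 h.le)]
    exact hr.hasDerivAt.congr_of_eventuallyEq (indicator_Ici_eventuallyEq_self h)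

theorem contDiffOn_indicator_Ici {Ω : Set ℝ} (hΩ : IsOpen Ω) {k : ℕ} (hr : ContDiffOn ℝ k r Ω)
    (hflat : ∀ i ≤ k, iteratedDeriv i r x₀ = 0) : ContDiffOn ℝ k ((Ici x₀).indicator r) Ω := by
  induction k generalizing r with
  | zero =>
    rw [Nat.cast_zero, contDiffOn_zero] at hr ⊢
    exact fun y hy => (continuousAt_indicator_Ici (hr.continuousAt (hΩ.mem_nhds hy))
      (by simpa using hflat 0 le_rfl)).continuousWithinAt
  | succ k ih =>
    have hdiff : ∀ y ∈ Ω, HasDerivAt ((Ici x₀).indicator r) ((Ici x₀).indicator (deriv r) y) y :=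
      fun y hy => hasDerivAt_indicator_Ici
        ((hr.differentiableOn (by simp)).differentiableAt (hΩ.mem_nhds hy))
        (by simpa using hflat 0 (by omega)) (by simpa using hflat 1 (by omega))
    have hderiv : ContDiffOn ℝ k ((Ici x₀).indicator (deriv r)) Ω :=
      ih (hr.deriv_of_isOpen hΩ (by push_cast; rfl))
        fun i hi => by simpa [iteratedDeriv_succ'] using hflat (i + 1) (by omega)
    rw [Nat.cast_succ, contDiffOn_succ_iff_deriv_of_isOpen hΩ]
    exact ⟨fun y hy => (hdiff y hy).differentiableAt.differentiableWithinAt, by simp,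
      hderiv.congr fun y hy => (hdiff y hy).deriv⟩

end IndicatorIci

theorem iteratedDeriv_sum_mul_sub_pow_self (c : ℕ → ℝ) (x₀ : ℝ) {n j : ℕ} (hj : j ≤ n) :
    iteratedDeriv j (fun y => ∑ i ∈ Finset.range (n + 1), c i * (y - x₀) ^ i) x₀ =
      j.factorial * c j := by
  have hmono : ∀ i, iteratedDeriv j (fun y => (y - x₀) ^ i) x₀ =
      if j = i then (i.factorial : ℝ) else 0 := fun i => by
    rw [congrFun (iteratedDeriv_comp_sub_const j (· ^ i) x₀), sub_self, iteratedDeriv_fun_pow_zero,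
      Nat.cast_ite, Nat.cast_zero]
  rw [iteratedDeriv_fun_sum fun i _ => by fun_prop]
  simp only [iteratedDeriv_const_mul_field, hmono, mul_ite, mul_zero, Finset.sum_ite_eq,
    Finset.mem_range, Nat.lt_succ_of_le hj, if_true, mul_comm]

structure IsLinearOnContDiffOn (k : ℕ) (Ω : Set ℝ) (D : (ℝ → ℝ) → ℝ → ℝ) : Prop where
  map_add : ∀ f g : ℝ → ℝ, ContDiffOn ℝ k f Ω → ContDiffOn ℝ k g Ω →
    ∀ x ∈ Ω, D (fun y => f y + g y) x = D f x + D g x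
  map_smul : ∀ (a : ℝ) (f : ℝ → ℝ), ContDiffOn ℝ k f Ω →
    ∀ x ∈ Ω, D (fun y => a * f y) x = a * D f x

def SatisfiesCubicIdentity (k : ℕ) (Ω : Set ℝ) (D : (ℝ → ℝ) → ℝ → ℝ) : Prop :=
  ∀ f : ℝ → ℝ, ContDiffOn ℝ k f Ω → ∀ x ∈ Ω,
    D (fun y => f y ^ 3) x - 3 * f x * D (fun y => f y ^ 2) x + 3 * f x ^ 2 * D f x = 0

namespace IsLinearOnContDiffOn

variable {k : ℕ} {Ω : Set ℝ} {D : (ℝ → ℝ) → ℝ → ℝ} {x : ℝ}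

theorem map_sub (hD : IsLinearOnContDiffOn k Ω D) {f g : ℝ → ℝ} (hf : ContDiffOn ℝ k f Ω)
    (hg : ContDiffOn ℝ k g Ω) (hx : x ∈ Ω) : D (fun y => f y - g y) x = D f x - D g x := by
  have h := hD.map_add (fun y => f y - g y) g (hf.sub hg) hg x hx
  simp only [sub_add_cancel] at h
  linarith

theorem map_sum (hD : IsLinearOnContDiffOn k Ω D) {ι : Type*} (s : Finset ι) {g : ι → ℝ → ℝ}
    (hg : ∀ i ∈ s, ContDiffOn ℝ k (g i) Ω) (hx : x ∈ Ω) :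
    D (fun y => ∑ i ∈ s, g i y) x = ∑ i ∈ s, D (g i) x := by
  classical
  induction s using Finset.induction_on with
  | empty =>
    simpa using hD.map_smul 0 (fun _ => 0) contDiffOn_const x hx
  | insert i s hi ih =>
    simp only [Finset.sum_insert hi]
    rw [hD.map_add _ _ (hg i (Finset.mem_insert_self i s))
      (ContDiffOn.sum fun j hj => hg j (Finset.mem_insert_of_mem hj)) x hx,
      ih fun j hj => hg j (Finset.mem_insert_of_mem hj)]

theorem apply_const_eq_zero (hD : IsLinearOnContDiffOn k Ω D) (hcube : SatisfiesCubicIdentity k Ω D)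
    (c : ℝ) (hx : x ∈ Ω) : D (fun _ => c) x = 0 := by
  have hD1 : D (fun _ => 1) x = 0 := by simpa using hcube (fun _ => 1) contDiffOn_const x hx
  simpa [hD1] using hD.map_smul c (fun _ => 1) contDiffOn_const x hx

theorem apply_sq_mul_eq_zero (hD : IsLinearOnContDiffOn k Ω D)
    (hcube : SatisfiesCubicIdentity k Ω D) {f h : ℝ → ℝ} (hf : ContDiffOn ℝ k f Ω)
    (hh : ContDiffOn ℝ k h Ω) (hx : x ∈ Ω) (hfx : f x = 0) (hhx : h x = 0) :
    D (fun y => f y ^ 2 * h y) x = 0 := by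
  have hcube_zero : ∀ u : ℝ → ℝ, ContDiffOn ℝ k u Ω → u x = 0 → D (fun y => u y ^ 3) x = 0 :=
    fun u hu hux => by simpa [hux] using hcube u hu x hx
  -- `(f + h)³ = (f - h)³ + 2 h³ + 6 f² h`
  have key := hD.map_add (fun y => (f y - h y) ^ 3 + 2 * h y ^ 3) (fun y => 6 * (f y ^ 2 * h y))
    (by fun_prop) (by fun_prop) x hx
  rw [show (fun y => (f y - h y) ^ 3 + 2 * h y ^ 3 + 6 * (f y ^ 2 * h y)) =
      fun y => (f y + h y) ^ 3 from funext fun y => by ring,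
    hD.map_add _ _ (by fun_prop) (by fun_prop) x hx, hD.map_smul _ _ (by fun_prop) x hx,
    hD.map_smul _ _ (by fun_prop) x hx, hcube_zero _ (by fun_prop) (by simp [hfx, hhx]),
    hcube_zero _ (by fun_prop) (by simp [hfx, hhx]), hcube_zero h hh hhx] at key
  linarith

theorem apply_eq_zero_of_eventuallyEq_zero (hD : IsLinearOnContDiffOn k Ω D)
    (hcube : SatisfiesCubicIdentity k Ω D) {f : ℝ → ℝ} (hf : ContDiffOn ℝ k f Ω) (hx : x ∈ Ω)
    (hf0 : f =ᶠ[𝓝 x] 0) : D f x = 0 := by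
  obtain ⟨ε, hε, hball⟩ := Metric.eventually_nhds_iff_ball.1 hf0
  let φ : ContDiffBump x := ⟨ε / 2, ε, by positivity, by linarith⟩
  -- `w := 1 - φ` vanishes at `x` and equals `1` on the support of `f`, so `f = w² (w f)`
  have hw : ContDiffOn ℝ k (fun y => 1 - φ y) Ω := (contDiff_const.sub φ.contDiff).contDiffOn
  have hwx : 1 - φ x = 0 := by
    rw [φ.one_of_mem_closedBall (Metric.mem_closedBall_self (by positivity)), sub_self]
  have hfw : (fun y => (1 - φ y) ^ 2 * ((1 - φ y) * f y)) = f := by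
    funext y
    by_cases hy : dist y x < ε
    · simp [hball y hy]
    · simp [φ.zero_of_le_dist (not_lt.1 hy)]
  simpa [hfw] using hD.apply_sq_mul_eq_zero hcube hw (hw.mul hf) hx hwx (by simp [hwx])

theorem apply_eq_zero_of_eqOn_zero (hD : IsLinearOnContDiffOn k Ω D)
    (hcube : SatisfiesCubicIdentity k Ω D) (hΩ : IsOpen Ω) {f : ℝ → ℝ} (hf : ContDiffOn ℝ k f Ω)
    (hDf : ContinuousOn (D f) Ω) {U : Set ℝ} (hU : IsOpen U) (hfU : EqOn f 0 U) (hx : x ∈ Ω)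
    [(𝓝[U] x).NeBot] : D f x = 0 := by
  have hlim : Tendsto (D f) (𝓝[U] x) (𝓝 (D f x)) :=
    (hDf.continuousAt (hΩ.mem_nhds hx)).tendsto.mono_left nhdsWithin_le_nhds
  refine tendsto_nhds_unique hlim (tendsto_const_nhds.congr' ?_)
  filter_upwards [self_mem_nhdsWithin, mem_nhdsWithin_of_mem_nhds (hΩ.mem_nhds hx)]
    with y hyU hyΩ
  exact (hD.apply_eq_zero_of_eventuallyEq_zero hcube hf hyΩ
    (eventually_of_mem (hU.mem_nhds hyU) hfU)).symm

theorem apply_eq_zero_of_iteratedDeriv_eq_zero (hD : IsLinearOnContDiffOn k Ω D)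
    (hcube : SatisfiesCubicIdentity k Ω D) (hΩ : IsOpen Ω)
    (hmap : ∀ f : ℝ → ℝ, ContDiffOn ℝ k f Ω → ContinuousOn (D f) Ω) {f : ℝ → ℝ}
    (hf : ContDiffOn ℝ k f Ω) (hx : x ∈ Ω) (hflat : ∀ i ≤ k, iteratedDeriv i f x = 0) :
    D f x = 0 := by
  set g := (Ici x).indicator f
  have hg : ContDiffOn ℝ k g Ω := contDiffOn_indicator_Ici hΩ hf hflat
  have hg0 : D g x = 0 :=
    hD.apply_eq_zero_of_eqOn_zero hcube hΩ hg (hmap g hg) (isOpen_Iio (a := x))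
      (fun y hy => indicator_of_notMem (notMem_Ici.2 hy) f) hx
  have hfg0 : D (fun y => f y - g y) x = 0 :=
    hD.apply_eq_zero_of_eqOn_zero hcube hΩ (hf.sub hg) (hmap _ (hf.sub hg)) (isOpen_Ioi (a := x))
      (fun y hy => by simp [g, indicator_of_mem (mem_Ici.2 (mem_Ioi.1 hy).le)]) hx
  linarith [hD.map_sub hf hg hx]

theorem apply_eq_sum_taylor (hD : IsLinearOnContDiffOn k Ω D)
    (hcube : SatisfiesCubicIdentity k Ω D) (hΩ : IsOpen Ω)
    (hmap : ∀ f : ℝ → ℝ, ContDiffOn ℝ k f Ω → ContinuousOn (D f) Ω) {f : ℝ → ℝ}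
    (hf : ContDiffOn ℝ k f Ω) (hx : x ∈ Ω) :
    D f x = ∑ i ∈ Finset.range (k + 1),
      iteratedDeriv i f x / i.factorial * D (fun y => (y - x) ^ i) x := by
  set T := fun y => ∑ i ∈ Finset.range (k + 1), iteratedDeriv i f x / i.factorial * (y - x) ^ i
  have hT : ContDiff ℝ k T := by fun_prop
  have hflat : ∀ j ≤ k, iteratedDeriv j (f - T) x = 0 := fun j hj => by
    rw [iteratedDeriv_sub ((hf.contDiffAt (hΩ.mem_nhds hx)).of_le (by exact_mod_cast hj))
      (hT.contDiffAt.of_le (by exact_mod_cast hj)), iteratedDeriv_sum_mul_sub_pow_self _ _ hj,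
      mul_div_cancel₀ _ (Nat.cast_ne_zero.2 j.factorial_ne_zero), sub_self]
  have hrest := hD.apply_eq_zero_of_iteratedDeriv_eq_zero hcube hΩ hmap (hf.sub hT.contDiffOn)
    hx hflat
  rw [hD.map_sub hf hT.contDiffOn hx, hD.map_sum _ (fun i _ => by fun_prop) hx] at hrest
  rw [sub_eq_zero.1 hrest]
  exact Finset.sum_congr rfl fun i _ => hD.map_smul _ _ (by fun_prop) x hx

theorem apply_sub_pow_eq_zero (hD : IsLinearOnContDiffOn k Ω D)
    (hcube : SatisfiesCubicIdentity k Ω D) (hx : x ∈ Ω) {i : ℕ} (hi : 3 ≤ i) :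
    D (fun y => (y - x) ^ i) x = 0 := by
  have h := hD.apply_sq_mul_eq_zero hcube (f := fun y => y - x) (h := fun y => (y - x) ^ (i - 2))
    (by fun_prop) (by fun_prop) hx (sub_self x) (by simp; omega)
  rwa [show (fun y => (y - x) ^ 2 * (y - x) ^ (i - 2)) = fun y => (y - x) ^ i from
    funext fun y => by rw [← pow_add, Nat.add_sub_cancel' (by omega)]] at h

theorem apply_sub_eq (hD : IsLinearOnContDiffOn k Ω D) (hcube : SatisfiesCubicIdentity k Ω D)
    (hx : x ∈ Ω) : D (fun y => y - x) x = D (fun y => y) x := by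
  rw [hD.map_sub (f := fun y => y) contDiffOn_id contDiffOn_const hx,
    hD.apply_const_eq_zero hcube x hx, sub_zero]

theorem apply_sub_sq_eq (hD : IsLinearOnContDiffOn k Ω D) (hcube : SatisfiesCubicIdentity k Ω D)
    (hx : x ∈ Ω) :
    D (fun y => (y - x) ^ 2) x = D (fun y => y ^ 2) x - 2 * x * D (fun y => y) x := by
  have hsplit := hD.map_add (fun y => y ^ 2 - 2 * x * y) (fun _ => x ^ 2) (by fun_prop)
    contDiffOn_const x hx
  have hsub := hD.map_sub (f := fun y => y ^ 2) (g := fun y => 2 * x * y) (by fun_prop)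
    (by fun_prop) hx
  have hsmul := hD.map_smul (2 * x) (fun y => y) contDiffOn_id x hx
  rw [show (fun y => y ^ 2 - 2 * x * y + x ^ 2) = fun y => (y - x) ^ 2 from
    funext fun y => by ring, hD.apply_const_eq_zero hcube _ hx] at hsplit
  linarith

end IsLinearOnContDiffOn

-- `c₁ = D(y)` and `c₂ = D((y - x)²)(x) / 2`, expanded so that continuity in `x` is visible
def firstCoeff (k : ℕ) (D : (ℝ → ℝ) → ℝ → ℝ) (x : ℝ) : ℝ :=
  if k = 0 then 0 else D (fun y => y) x

noncomputable def secondCoeff (k : ℕ) (D : (ℝ → ℝ) → ℝ → ℝ) (x : ℝ) : ℝ :=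
  if k < 2 then 0 else (D (fun y => y ^ 2) x - 2 * x * D (fun y => y) x) / 2

section Coefficients

variable {k : ℕ} {Ω : Set ℝ} {D : (ℝ → ℝ) → ℝ → ℝ}

theorem continuousOn_firstCoeff (hmap : ∀ f : ℝ → ℝ, ContDiffOn ℝ k f Ω → ContinuousOn (D f) Ω) :
    ContinuousOn (firstCoeff k D) Ω := by
  unfold firstCoeff
  split_ifs
  exacts [continuousOn_const, hmap _ contDiffOn_id]

theorem continuousOn_secondCoeff (hmap : ∀ f : ℝ → ℝ, ContDiffOn ℝ k f Ω → ContinuousOn (D f) Ω) :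
    ContinuousOn (secondCoeff k D) Ω := by
  unfold secondCoeff
  split_ifs
  exacts [continuousOn_const, ((hmap _ (by fun_prop)).sub
    ((continuousOn_const.mul continuousOn_id).mul (hmap _ contDiffOn_id))).div_const 2]

theorem IsLinearOnContDiffOn.apply_eq_firstCoeff_add_secondCoeff
    (hD : IsLinearOnContDiffOn k Ω D) (hcube : SatisfiesCubicIdentity k Ω D) (hΩ : IsOpen Ω)
    (hmap : ∀ f : ℝ → ℝ, ContDiffOn ℝ k f Ω → ContinuousOn (D f) Ω) {f : ℝ → ℝ}
    (hf : ContDiffOn ℝ k f Ω) {x : ℝ} (hx : x ∈ Ω) :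
    D f x = firstCoeff k D x * deriv f x + secondCoeff k D x * deriv (deriv f) x := by
  have h0 := hD.apply_const_eq_zero hcube 1 hx
  have h2 : iteratedDeriv 2 f = deriv (deriv f) := by rw [iteratedDeriv_succ, iteratedDeriv_one]
  rw [hD.apply_eq_sum_taylor hcube hΩ hmap hf hx]
  rcases k with _ | _ | n
  · simp [firstCoeff, secondCoeff, h0]
  · simp [Finset.sum_range_succ, firstCoeff, secondCoeff, h0, hD.apply_sub_eq hcube hx, mul_comm]
  · simp only [Finset.sum_range_succ']
    rw [Finset.sum_eq_zero fun i _ => by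
      rw [hD.apply_sub_pow_eq_zero hcube hx (by omega), mul_zero]]
    simp [firstCoeff, secondCoeff, h0, h2, hD.apply_sub_eq hcube hx, hD.apply_sub_sq_eq hcube hx]
    ring

end Coefficients

theorem statement17_general (k : ℕ) (Ω : Set ℝ) (hΩ : IsOpen Ω)
    (D : (ℝ → ℝ) → (ℝ → ℝ))
    (hmap : ∀ f : ℝ → ℝ, ContDiffOn ℝ k f Ω → ContinuousOn (D f) Ω)
    (hadd : ∀ f g : ℝ → ℝ, ContDiffOn ℝ k f Ω → ContDiffOn ℝ k g Ω →
      ∀ x ∈ Ω, D (fun y => f y + g y) x = D f x + D g x)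
    (hsmul : ∀ (a : ℝ) (f : ℝ → ℝ), ContDiffOn ℝ k f Ω →
      ∀ x ∈ Ω, D (fun y => a * f y) x = a * D f x)
    (hpow : ∀ f : ℝ → ℝ, ContDiffOn ℝ k f Ω →
      ∀ x ∈ Ω,
        D (fun y => f y ^ 3) x - 3 * f x * D (fun y => f y ^ 2) x
          + 3 * f x ^ 2 * D f x = 0) :
    ∃ c₁ c₂ : ℝ → ℝ,
      ContinuousOn c₁ Ω ∧ ContinuousOn c₂ Ω ∧
      (∀ f : ℝ → ℝ, ContDiffOn ℝ k f Ω → ∀ x ∈ Ω,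
        D f x = c₁ x * deriv f x + c₂ x * deriv (deriv f) x) ∧
      (k = 0 → c₁ = 0 ∧ c₂ = 0) ∧
      (k = 1 → c₂ = 0) := by
  have hD : IsLinearOnContDiffOn k Ω D := ⟨hadd, hsmul⟩
  refine ⟨firstCoeff k D, secondCoeff k D, continuousOn_firstCoeff hmap,
    continuousOn_secondCoeff hmap,
    fun f hf x hx => hD.apply_eq_firstCoeff_add_secondCoeff hpow hΩ hmap hf hx, fun hk => ?_,
    fun hk => ?_⟩
  · subst hk
    exact ⟨funext fun x => by simp [firstCoeff], funext fun x => by simp [secondCoeff]⟩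
  · subst hk
    exact funext fun x => by simp [secondCoeff]

/-- If a linear (additive and ℝ-homogeneous) operator
`D : C^k(Ω) → C(Ω)` satisfies the single-function identity
`D(f³) − 3·f·D(f²) + 3·f²·D(f) = 0` for all `f ∈ C^k(Ω)`, then there are continuous
functions `c₁, c₂ : Ω → ℝ` with `D(f)(x) = c₁(x)·f'(x) + c₂(x)·f''(x)` for all
`f ∈ C^k(Ω)`, `x ∈ Ω`; moreover for `k = 0` one has `c₁ = c₂ = 0` (i.e. `D = 0` on `Ω`),
and for `k = 1` one has `c₂ = 0`.  (The statement is formulated for every nonnegative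
integer `k`, the clauses for `k = 0` and `k = 1` being recorded as implications.) -/
theorem statement17 (k : ℕ) (Ω : Set ℝ) (hΩ : IsOpen Ω) (hΩne : Ω.Nonempty)
    (D : (ℝ → ℝ) → (ℝ → ℝ))
    (hmap : ∀ f : ℝ → ℝ, ContDiffOn ℝ k f Ω → ContinuousOn (D f) Ω)
    (hadd : ∀ f g : ℝ → ℝ, ContDiffOn ℝ k f Ω → ContDiffOn ℝ k g Ω →
      ∀ x ∈ Ω, D (fun y => f y + g y) x = D f x + D g x)
    (hsmul : ∀ (a : ℝ) (f : ℝ → ℝ), ContDiffOn ℝ k f Ω →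
      ∀ x ∈ Ω, D (fun y => a * f y) x = a * D f x)
    (hpow : ∀ f : ℝ → ℝ, ContDiffOn ℝ k f Ω →
      ∀ x ∈ Ω,
        D (fun y => f y ^ 3) x - 3 * f x * D (fun y => f y ^ 2) x
          + 3 * f x ^ 2 * D f x = 0) :
    ∃ c₁ c₂ : ℝ → ℝ,
      ContinuousOn c₁ Ω ∧ ContinuousOn c₂ Ω ∧
      (∀ f : ℝ → ℝ, ContDiffOn ℝ k f Ω → ∀ x ∈ Ω,
        D f x = c₁ x * deriv f x + c₂ x * deriv (deriv f) x) ∧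
      (k = 0 → c₁ = 0 ∧ c₂ = 0) ∧
      (k = 1 → c₂ = 0) :=
  statement17_general k Ω hΩ D hmap hadd hsmul hpow
end
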